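/- arXiv:2109.01530 — 12 statements merged into one kernel-verified Lean document; each statement's English description precedes it below -/
import Mathlib

section
/- There is no non-consecutive Latin square of order n for 2 ≤ n ≤ 4. -/
/-- An `n × n` Latin square with entries in `{1, …, n}`. -/
def latin (n : ℕ) (M : Fin n → Fin n → ℕ) : Prop :=
  (∀ i j, M i j ∈ Finset.Icc 1 n) ∧
  (∀ i, Function.Injective fun j => M i j) ∧
  (∀ j, Function.Injective fun i => M i j)

/-- Two cells are orthogonally adjacent. -/
def orthAdj (n : ℕ) (p q : Fin n × Fin n) : Prop :=
  (p.1 = q.1 ∧ (p.2.val + 1 = q.2.val ∨ q.2.val + 1 = p.2.val)) ∨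
  (p.2 = q.2 ∧ (p.1.val + 1 = q.1.val ∨ q.1.val + 1 = p.1.val))

/-- Two cells are a king's move apart (orthogonally or diagonally adjacent). -/
def kingAdj (n : ℕ) (p q : Fin n × Fin n) : Prop :=
  p ≠ q ∧ ((p.1.val : ℤ) - q.1.val).natAbs ≤ 1 ∧ ((p.2.val : ℤ) - q.2.val).natAbs ≤ 1

/-- Two cells are a knight's move apart. -/
def knightAdj (n : ℕ) (p q : Fin n × Fin n) : Prop :=
  (((p.1.val : ℤ) - q.1.val).natAbs = 1 ∧ ((p.2.val : ℤ) - q.2.val).natAbs = 2) ∨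
  (((p.1.val : ℤ) - q.1.val).natAbs = 2 ∧ ((p.2.val : ℤ) - q.2.val).natAbs = 1)

/-- Two cells are a bishop's move apart: on a common diagonal, at nonzero distance. -/
def bishopMove (n : ℕ) (p q : Fin n × Fin n) : Prop :=
  ((p.1.val : ℤ) - q.1.val).natAbs = ((p.2.val : ℤ) - q.2.val).natAbs ∧ p.1 ≠ q.1

/-- Two cells are orthogonally adjacent on the torus (wrapping around). -/
def torAdj (n : ℕ) (p q : Fin n × Fin n) : Prop :=
  p ≠ q ∧
    ((p.1 = q.1 ∧ ((p.2.val + 1) % n = q.2.val ∨ (q.2.val + 1) % n = p.2.val)) ∨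
     (p.2 = q.2 ∧ ((p.1.val + 1) % n = q.1.val ∨ (q.1.val + 1) % n = p.1.val)))

/-- Two values differ by exactly 1. -/
def diffOne (a b : ℕ) : Prop := ((a : ℤ) - (b : ℤ)).natAbs = 1

/-! Every row of a non-consecutive Latin square of order 4 is `2 4 1 3` or `3 1 4 2`, so its first
column would hold four distinct values from `{2, 3}`. For orders 2 and 3 not even a single row
exists. -/

def IsNonConsecutive {n : ℕ} (f : Fin n → ℕ) : Prop :=
  ∀ i j : Fin n, i.val + 1 = j.val → ¬ diffOne (f i) (f j)

namespace IsNonConsecutive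

theorem false_of_fin_two {f : Fin 2 → ℕ} (hf : IsNonConsecutive f)
    (hinj : Function.Injective f) (hmem : ∀ i, f i ∈ Finset.Icc 1 2) : False := by
  have h01 := hf 0 1 rfl
  have e01 := hinj.ne (show (0 : Fin 2) ≠ 1 by decide)
  have b0 := hmem 0; have b1 := hmem 1
  simp only [Finset.mem_Icc] at b0 b1
  simp only [diffOne] at h01
  omega

theorem false_of_fin_three {f : Fin 3 → ℕ} (hf : IsNonConsecutive f)
    (hinj : Function.Injective f) (hmem : ∀ i, f i ∈ Finset.Icc 1 3) : False := by
  have h01 := hf 0 1 rfl; have h12 := hf 1 2 rfl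
  have e01 := hinj.ne (show (0 : Fin 3) ≠ 1 by decide)
  have e02 := hinj.ne (show (0 : Fin 3) ≠ 2 by decide)
  have e12 := hinj.ne (show (1 : Fin 3) ≠ 2 by decide)
  have b0 := hmem 0; have b1 := hmem 1; have b2 := hmem 2
  simp only [Finset.mem_Icc] at b0 b1 b2
  simp only [diffOne] at h01 h12
  omega

theorem head_eq_two_or_three_of_fin_four {f : Fin 4 → ℕ} (hf : IsNonConsecutive f)
    (hinj : Function.Injective f) (hmem : ∀ i, f i ∈ Finset.Icc 1 4) : f 0 = 2 ∨ f 0 = 3 := by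
  have h01 := hf 0 1 rfl; have h12 := hf 1 2 rfl; have h23 := hf 2 3 rfl
  have e01 := hinj.ne (show (0 : Fin 4) ≠ 1 by decide)
  have e02 := hinj.ne (show (0 : Fin 4) ≠ 2 by decide)
  have e03 := hinj.ne (show (0 : Fin 4) ≠ 3 by decide)
  have e12 := hinj.ne (show (1 : Fin 4) ≠ 2 by decide)
  have e13 := hinj.ne (show (1 : Fin 4) ≠ 3 by decide)
  have e23 := hinj.ne (show (2 : Fin 4) ≠ 3 by decide)
  have b0 := hmem 0; have b1 := hmem 1; have b2 := hmem 2; have b3 := hmem 3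
  simp only [Finset.mem_Icc] at b0 b1 b2 b3
  simp only [diffOne] at h01 h12 h23
  omega

end IsNonConsecutive

/-- There is no non-consecutive Latin square of order `n` for `2 ≤ n ≤ 4`. -/
theorem stmt2 (n : ℕ) (h2 : 2 ≤ n) (h4 : n ≤ 4) :
    ¬ ∃ M : Fin n → Fin n → ℕ, latin n M ∧
      ∀ p q : Fin n × Fin n, orthAdj n p q → ¬ diffOne (M p.1 p.2) (M q.1 q.2) := by
  rintro ⟨M, ⟨hmem, hrow, hcol⟩, hnc⟩
  have hrowNC : ∀ i, IsNonConsecutive (M i) := fun i a b hab =>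
    hnc (i, a) (i, b) (Or.inl ⟨rfl, Or.inl hab⟩)
  interval_cases n
  · exact (hrowNC 0).false_of_fin_two (hrow 0) (hmem 0)
  · exact (hrowNC 0).false_of_fin_three (hrow 0) (hmem 0)
  · have hcol0 : Set.MapsTo (M · 0) (Finset.univ : Finset (Fin 4)) ({2, 3} : Finset ℕ) :=
      fun i _ => by
        simpa using (hrowNC i).head_eq_two_or_three_of_fin_four (hrow i) (hmem i)
    have hcard := Finset.card_le_card_of_injOn _ hcol0 (hcol 0).injOn
    simp at hcard
end

section
/- Every non-consecutive Latin square of order 5 is obtained by taking a non-consecutive permutation of {1,...,5} whose first and last entries do not differ by 1, and taking each subsequent row to be a cyclic shift of the previous row by 1, all shifts to the left or all to the right. -/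
variable {n : ℕ}

def Consecutive (a b : Fin n) : Prop := a.val + 1 = b.val ∨ b.val + 1 = a.val

instance : DecidableRel (Consecutive (n := n)) := fun _ _ => by
  unfold Consecutive; infer_instance

theorem Consecutive.symm {a b : Fin n} (h : Consecutive a b) : Consecutive b a :=
  Or.symm h

def IsNonConsecutiveRow (g : Fin n → Fin n) : Prop :=
  ∀ j j' : Fin n, j.val + 1 = j'.val → ¬ Consecutive (g j) (g j')

instance (g : Fin n → Fin n) : Decidable (IsNonConsecutiveRow g) := by
  unfold IsNonConsecutiveRow; infer_instance

def AreCompatibleRows (g h : Fin n → Fin n) : Prop :=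
  ∀ j, g j ≠ h j ∧ ¬ Consecutive (g j) (h j)

instance (g h : Fin n → Fin n) : Decidable (AreCompatibleRows g h) := by
  unfold AreCompatibleRows; infer_instance

/-- `shiftBy 1` is the cyclic shift to the left, `shiftBy (-1)` the one to the right. -/
def shiftBy {α : Type*} [NeZero n] (s : Fin n) (g : Fin n → α) : Fin n → α :=
  fun j => g (j + s)

theorem shiftBy_injective_of_injective {α : Type*} [NeZero n] {g : Fin n → α}
    (hg : Function.Injective g) : Function.Injective fun s : Fin n => shiftBy s g := by
  intro s s' h
  simpa [shiftBy] using hg (congr_fun h 0)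

theorem not_consecutive_first_last_of_compatible_shiftBy {g : Fin (n + 1) → Fin (n + 1)}
    {s : Fin (n + 1)} (hs : s = 1 ∨ s = -1) (hcompat : AreCompatibleRows g (shiftBy s g)) :
    ¬ Consecutive (g 0) (g (Fin.last n)) := by
  rcases hs with rfl | rfl
  · exact fun h => (hcompat (Fin.last n)).2 (by simpa [shiftBy] using h.symm)
  · have : (-1 : Fin (n + 1)) = Fin.last n := by rw [← Fin.neg_last, neg_neg]
    simpa [shiftBy, this] using (hcompat 0).2

/-- The 14 non-consecutive permutations of `{1, …, 5}`, lowered by one. -/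
def nonConsecutivePerms : Fin 14 → Fin 5 → Fin 5 :=
  ![![0, 2, 4, 1, 3], ![0, 3, 1, 4, 2], ![1, 3, 0, 2, 4], ![1, 3, 0, 4, 2], ![1, 4, 2, 0, 3],
    ![2, 0, 3, 1, 4], ![2, 0, 4, 1, 3], ![2, 4, 0, 3, 1], ![2, 4, 1, 3, 0], ![3, 0, 2, 4, 1],
    ![3, 1, 4, 0, 2], ![3, 1, 4, 2, 0], ![4, 1, 3, 0, 2], ![4, 2, 0, 3, 1]]

theorem exists_eq_nonConsecutivePerms {g : Fin 5 → Fin 5} (hg : Function.Injective g)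
    (hnc : IsNonConsecutiveRow g) : ∃ k, g = nonConsecutivePerms k := by
  -- Enumerating 5-tuples rather than functions keeps the kernel computation small.
  have key : ∀ a b c d e : Fin 5, Function.Injective ![a, b, c, d, e] →
      IsNonConsecutiveRow ![a, b, c, d, e] → ∃ k, ![a, b, c, d, e] = nonConsecutivePerms k := by
    decide +kernel
  have hg5 : g = ![g 0, g 1, g 2, g 3, g 4] := by
    funext j; fin_cases j <;> rfl
  rw [hg5] at hg hnc ⊢
  exact key _ _ _ _ _ hg hnc

theorem nonConsecutivePerms_eq_shiftBy_of_stacked : ∀ a b c : Fin 14,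
    AreCompatibleRows (nonConsecutivePerms a) (nonConsecutivePerms b) →
    AreCompatibleRows (nonConsecutivePerms b) (nonConsecutivePerms c) →
    (∀ j, nonConsecutivePerms a j ≠ nonConsecutivePerms c j) →
    ∃ s : Fin 5, (s = 1 ∨ s = -1) ∧
      nonConsecutivePerms b = shiftBy s (nonConsecutivePerms a) ∧
      nonConsecutivePerms c = shiftBy s (nonConsecutivePerms b) := by
  decide +kernel

theorem exists_shiftBy_of_stacked {g h k : Fin 5 → Fin 5}
    (hg : Function.Injective g) (hgnc : IsNonConsecutiveRow g)
    (hh : Function.Injective h) (hhnc : IsNonConsecutiveRow h)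
    (hk : Function.Injective k) (hknc : IsNonConsecutiveRow k)
    (hgh : AreCompatibleRows g h) (hhk : AreCompatibleRows h k) (hgk : ∀ j, g j ≠ k j) :
    ∃ s : Fin 5, (s = 1 ∨ s = -1) ∧ h = shiftBy s g ∧ k = shiftBy s h := by
  obtain ⟨a, rfl⟩ := exists_eq_nonConsecutivePerms hg hgnc
  obtain ⟨b, rfl⟩ := exists_eq_nonConsecutivePerms hh hhnc
  obtain ⟨c, rfl⟩ := exists_eq_nonConsecutivePerms hk hknc
  exact nonConsecutivePerms_eq_shiftBy_of_stacked a b c hgh hhk hgk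

theorem exists_shiftBy_of_rows (r : Fin 5 → Fin 5 → Fin 5)
    (hinj : ∀ i, Function.Injective (r i)) (hnc : ∀ i, IsNonConsecutiveRow (r i))
    (hcompat : ∀ i i' : Fin 5, i'.val = i.val + 1 → AreCompatibleRows (r i) (r i'))
    (hcol : ∀ i i' : Fin 5, i ≠ i' → ∀ j, r i j ≠ r i' j) :
    ∃ s : Fin 5, (s = 1 ∨ s = -1) ∧
      ∀ i i' : Fin 5, i'.val = i.val + 1 → r i' = shiftBy s (r i) := by
  have stacked (a b c : Fin 5) (hab : b.val = a.val + 1) (hbc : c.val = b.val + 1) :=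
    exists_shiftBy_of_stacked (hinj a) (hnc a) (hinj b) (hnc b) (hinj c) (hnc c)
      (hcompat a b hab) (hcompat b c hbc) (hcol a c (Fin.ne_of_val_ne (by omega)))
  obtain ⟨s, hs, h01, h12⟩ := stacked 0 1 2 rfl rfl
  obtain ⟨s', -, h12', h23⟩ := stacked 1 2 3 rfl rfl
  obtain ⟨s'', -, h23', h34⟩ := stacked 2 3 4 rfl rfl
  obtain rfl : s' = s := shiftBy_injective_of_injective (hinj 1) (h12'.symm.trans h12)
  obtain rfl : s'' = s' := shiftBy_injective_of_injective (hinj 2) (h23'.symm.trans h23)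
  refine ⟨s'', hs, fun i i' hi => ?_⟩
  fin_cases i <;> fin_cases i' <;> first | assumption | exact absurd hi (by decide)

def IsNonConsecutiveSquare (M : Fin n → Fin n → ℕ) : Prop :=
  ∀ p q : Fin n × Fin n, orthAdj n p q → ¬ diffOne (M p.1 p.2) (M q.1 q.2)

namespace latin

variable {M : Fin n → Fin n → ℕ} (hL : latin n M)

def toFin (i j : Fin n) : Fin n :=
  ⟨M i j - 1, by have := Finset.mem_Icc.1 (hL.1 i j); omega⟩

theorem toFin_val_add_one (i j : Fin n) : (hL.toFin i j).val + 1 = M i j := by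
  have := Finset.mem_Icc.1 (hL.1 i j)
  simp only [toFin]
  omega

theorem diffOne_iff_consecutive (i j i' j' : Fin n) :
    diffOne (M i j) (M i' j') ↔ Consecutive (hL.toFin i j) (hL.toFin i' j') := by
  rw [← hL.toFin_val_add_one i j, ← hL.toFin_val_add_one i' j']
  simp only [diffOne, Consecutive]
  omega

theorem toFin_eq_iff (i j i' j' : Fin n) : hL.toFin i j = hL.toFin i' j' ↔ M i j = M i' j' := by
  rw [← hL.toFin_val_add_one i j, ← hL.toFin_val_add_one i' j', Nat.add_right_cancel_iff,
    Fin.val_inj]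

theorem injective_toFin (i : Fin n) : Function.Injective (hL.toFin i) :=
  fun _ _ h => hL.2.1 i ((hL.toFin_eq_iff _ _ _ _).1 h)

theorem toFin_ne_of_ne {i i' : Fin n} (hi : i ≠ i') (j : Fin n) :
    hL.toFin i j ≠ hL.toFin i' j :=
  fun h => hi (hL.2.2 j ((hL.toFin_eq_iff _ _ _ _).1 h))

variable {hL}

theorem isNonConsecutiveRow_toFin (hNC : IsNonConsecutiveSquare M) (i : Fin n) :
    IsNonConsecutiveRow (hL.toFin i) := by
  intro j j' hj
  rw [← hL.diffOne_iff_consecutive]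
  exact hNC (i, j) (i, j') (Or.inl ⟨rfl, Or.inl hj⟩)

theorem areCompatibleRows_toFin (hNC : IsNonConsecutiveSquare M) {i i' : Fin n}
    (hi : i'.val = i.val + 1) :
    AreCompatibleRows (hL.toFin i) (hL.toFin i') := by
  refine fun j => ⟨hL.toFin_ne_of_ne (Fin.ne_of_val_ne (by omega)) j, ?_⟩
  rw [← hL.diffOne_iff_consecutive]
  exact hNC (i, j) (i', j) (Or.inr ⟨rfl, Or.inl hi.symm⟩)

end latin

/-- Every non-consecutive Latin square of order 5 comes from cycling a cyclable
non-consecutive permutation: the first and last entries of the first row do not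
differ by 1, and each subsequent row is the cyclic shift of the previous one by 1,
all shifts to the left or all to the right. -/
theorem stmt3 (M : Fin 5 → Fin 5 → ℕ) (hL : latin 5 M)
    (hNC : ∀ p q : Fin 5 × Fin 5, orthAdj 5 p q → ¬ diffOne (M p.1 p.2) (M q.1 q.2)) :
    ¬ diffOne (M 0 0) (M 0 4) ∧
    ((∀ i i' j j' : Fin 5, i'.val = i.val + 1 → j'.val = (j.val + 1) % 5 →
        M i' j = M i j') ∨
     (∀ i i' j j' : Fin 5, i'.val = i.val + 1 → j'.val = (j.val + 1) % 5 →
        M i' j' = M i j)) := by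
  obtain ⟨s, hs, hshift⟩ := exists_shiftBy_of_rows hL.toFin hL.injective_toFin
    (latin.isNonConsecutiveRow_toFin hNC) (fun _ _ => latin.areCompatibleRows_toFin hNC)
    (fun _ _ => hL.toFin_ne_of_ne)
  have hM (i i' j j' : Fin 5) : M i' j' = M i j ↔ hL.toFin i' j' = hL.toFin i j :=
    (hL.toFin_eq_iff _ _ _ _).symm
  have hsucc {j j' : Fin 5} (hj : j'.val = (j.val + 1) % 5) : j' = j + 1 :=
    Fin.ext (by rw [Fin.val_add, hj]; rfl)
  refine ⟨?_, ?_⟩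
  · rw [hL.diffOne_iff_consecutive]
    refine not_consecutive_first_last_of_compatible_shiftBy hs ?_
    rw [← hshift 0 1 rfl]
    exact latin.areCompatibleRows_toFin hNC rfl
  · rcases hs with rfl | rfl
    · refine Or.inl fun i i' j j' hi hj => ?_
      rw [hM, hshift i i' hi, hsucc hj]
      rfl
    · refine Or.inr fun i i' j j' hi hj => ?_
      rw [hM, hshift i i' hi, hsucc hj]
      simp [shiftBy]
end

section
/- There is no non-consecutive by king's move Latin square of order 5; i.e., no 5×5 Latin square in which every pair of cells adjacent orthogonally or diagonally contain values differing by exactly 1 is forbidden. -/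
/-!
The two top rows alone are already impossible. Each row is a permutation of `1, …, 5` with no two
horizontally adjacent entries consecutive (there are 14 such), and a finite check shows that no two
of these can be stacked with all columns distinct and no consecutive entries vertically or
diagonally adjacent.
-/

instance (a b : ℕ) : Decidable (diffOne a b) := inferInstanceAs (Decidable (_ = _))

section Rows

variable {n : ℕ}

def NonconsecutiveRow (r : Fin n → ℕ) : Prop :=
  ∀ j k : Fin n, j.val + 1 = k.val → ¬ diffOne (r j) (r k)

def KingCompatibleRows (r s : Fin n → ℕ) : Prop :=
  (∀ j, r j ≠ s j) ∧ ∀ j k : Fin n, ((j.val : ℤ) - k.val).natAbs ≤ 1 → ¬ diffOne (r j) (s k)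

instance (r : Fin n → ℕ) : Decidable (NonconsecutiveRow r) := by
  unfold NonconsecutiveRow; infer_instance

instance (r s : Fin n → ℕ) : Decidable (KingCompatibleRows r s) := by
  unfold KingCompatibleRows; infer_instance

theorem latin.exists_perm_row {M : Fin n → Fin n → ℕ} (hM : latin n M) (i : Fin n) :
    ∃ σ : Equiv.Perm (Fin n), M i = fun j => (σ j : ℕ) + 1 := by
  obtain ⟨hmem, hrow, -⟩ := hM
  have hbound (j : Fin n) : 1 ≤ M i j ∧ M i j ≤ n := Finset.mem_Icc.mp (hmem i j)
  let f (j : Fin n) : Fin n := ⟨M i j - 1, by have := hbound j; omega⟩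
  have hf : Function.Injective f := fun j k h => hrow i <| by
    have := hbound j; have := hbound k; have := Fin.val_eq_of_eq h
    simp only [f] at this ⊢; omega
  refine ⟨Equiv.ofBijective f (Finite.injective_iff_bijective.mp hf), funext fun j => ?_⟩
  have := hbound j
  simp only [Equiv.ofBijective_apply, f]
  omega

variable {M : Fin n → Fin n → ℕ}
  (hking : ∀ p q : Fin n × Fin n, kingAdj n p q → ¬ diffOne (M p.1 p.2) (M q.1 q.2))
include hking

theorem nonconsecutiveRow_of_king (i : Fin n) : NonconsecutiveRow (M i) := by
  intro j k hjk
  refine hking (i, j) (i, k) ⟨fun h => ?_, by simp, by simp only; omega⟩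
  have := congrArg (fun p => p.2.val) h; simp only at this; omega

theorem kingCompatibleRows_of_king (hcol : ∀ j, Function.Injective fun i => M i j)
    {i i' : Fin n} (hii' : i.val + 1 = i'.val) : KingCompatibleRows (M i) (M i') := by
  have hne : i ≠ i' := fun h => by subst h; omega
  refine ⟨fun j h => hne (hcol j h), fun j k hjk => ?_⟩
  exact hking (i, j) (i', k) ⟨fun h => hne (congrArg Prod.fst h), by simp only; omega, hjk⟩

end Rows

set_option maxRecDepth 10000 in
theorem not_kingCompatibleRows_five (σ τ : Equiv.Perm (Fin 5))
    (hσ : NonconsecutiveRow fun j => (σ j : ℕ) + 1)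
    (hτ : NonconsecutiveRow fun j => (τ j : ℕ) + 1) :
    ¬ KingCompatibleRows (fun j => (σ j : ℕ) + 1) (fun j => (τ j : ℕ) + 1) := by
  revert σ τ
  decide

/-- There is no non-consecutive by king's move Latin square of order 5. -/
theorem stmt5 :
    ¬ ∃ M : Fin 5 → Fin 5 → ℕ, latin 5 M ∧
      ∀ p q : Fin 5 × Fin 5, kingAdj 5 p q → ¬ diffOne (M p.1 p.2) (M q.1 q.2) := by
  rintro ⟨M, hM, hking⟩
  obtain ⟨σ, hσ⟩ := hM.exists_perm_row 0
  obtain ⟨τ, hτ⟩ := hM.exists_perm_row 1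
  have hrow₀ := nonconsecutiveRow_of_king hking 0
  have hrow₁ := nonconsecutiveRow_of_king hking 1
  have hrows := kingCompatibleRows_of_king hking hM.2.2 (i := 0) (i' := 1) rfl
  rw [hσ] at hrow₀ hrows
  rw [hτ] at hrow₁ hrows
  exact not_kingCompatibleRows_five σ τ hrow₀ hrow₁ hrows
end

section
/- There is no 7×7 Latin square that is both non-consecutive by king's move and anti-king. -/
/-!
In two adjacent rows of such a square, the four cells holding `v` and `v + 1` carry
pairwise equal or consecutive values, so their columns are pairwise at distance at least `2`.
Four columns of `{0, …, 6}` that are pairwise at distance at least `2` are `0, 2, 4, 6`,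
so in a given row every value other than `7` sits in an even column.
But the odd columns `1` and `3` cannot both hold `7`.
-/

/-- The square `M` is anti-king and non-consecutive by king's move. -/
def KingSeparated (n : ℕ) (M : Fin n → Fin n → ℕ) : Prop :=
  ∀ p q : Fin n × Fin n, kingAdj n p q →
    M p.1 p.2 ≠ M q.1 q.2 ∧ ¬ diffOne (M p.1 p.2) (M q.1 q.2)

theorem latin.exists_eq {n : ℕ} {M : Fin n → Fin n → ℕ} (hM : latin n M) (i : Fin n)
    {v : ℕ} (hv₁ : 1 ≤ v) (hvn : v ≤ n) : ∃ j, M i j = v := by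
  have himage : Finset.univ.image (M i) = Finset.Icc 1 n :=
    Finset.eq_of_subset_of_card_le (Finset.image_subset_iff.2 fun j _ => hM.1 i j)
      (by simp [Finset.card_image_of_injective _ (hM.2.1 i)])
  have hv : v ∈ Finset.univ.image (M i) := himage ▸ Finset.mem_Icc.2 ⟨hv₁, hvn⟩
  simpa using hv

theorem KingSeparated.two_le_dist {n : ℕ} {M : Fin n → Fin n → ℕ} (hM : KingSeparated n M)
    {i i' j j' : Fin n} (hne : (i, j) ≠ (i', j')) (hi : Nat.dist i i' ≤ 1)
    (hv : M i j ≤ M i' j' + 1) (hv' : M i' j' ≤ M i j + 1) : 2 ≤ Nat.dist j j' := by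
  by_contra hj
  simp only [Nat.dist] at hi hj
  have hking : kingAdj n (i, j) (i', j') := ⟨hne, by dsimp only; omega, by dsimp only; omega⟩
  obtain ⟨hne_val, hnot_diffOne⟩ := hM _ _ hking
  simp only [diffOne] at hnot_diffOne hne_val
  omega

theorem even_of_pairwise_two_le_dist {a b c d : ℕ} (ha : a < 7) (hb : b < 7) (hc : c < 7)
    (hd : d < 7) (hab : 2 ≤ Nat.dist a b) (hac : 2 ≤ Nat.dist a c) (had : 2 ≤ Nat.dist a d)
    (hbc : 2 ≤ Nat.dist b c) (hbd : 2 ≤ Nat.dist b d) (hcd : 2 ≤ Nat.dist c d) : Even a := by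
  simp only [Nat.dist] at *
  rw [Nat.even_iff]
  omega

theorem KingSeparated.even_of_lt_seven {M : Fin 7 → Fin 7 → ℕ} (hlatin : latin 7 M)
    (hM : KingSeparated 7 M) {i i' : Fin 7} (hi : i.val + 1 = i'.val) {j : Fin 7}
    (hj : M i j < 7) : Even j.val := by
  have hv := hlatin.1 i j
  rw [Finset.mem_Icc] at hv
  obtain ⟨b, hb⟩ := hlatin.exists_eq i (v := M i j + 1) (by omega) (by omega)
  obtain ⟨c, hc⟩ := hlatin.exists_eq i' (v := M i j) (by omega) (by omega)
  obtain ⟨d, hd⟩ := hlatin.exists_eq i' (v := M i j + 1) (by omega) (by omega)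
  have hii' : i ≠ i' := fun h => by rw [h] at hi; omega
  have hdist_rows : Nat.dist i i' ≤ 1 := by simp only [Nat.dist]; omega
  have hjb : j ≠ b := fun h => by rw [h] at hb; omega
  have hcd : c ≠ d := fun h => by rw [h] at hc; omega
  refine even_of_pairwise_two_le_dist j.isLt b.isLt c.isLt d.isLt ?_ ?_ ?_ ?_ ?_ ?_
  · exact hM.two_le_dist (i := i) (i' := i) (by simp [hjb]) (by simp) (by omega) (by omega)
  · exact hM.two_le_dist (by simp [hii']) hdist_rows (by omega) (by omega)
  · exact hM.two_le_dist (by simp [hii']) hdist_rows (by omega) (by omega)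
  · exact hM.two_le_dist (by simp [hii']) hdist_rows (by omega) (by omega)
  · exact hM.two_le_dist (by simp [hii']) hdist_rows (by omega) (by omega)
  · exact hM.two_le_dist (i := i') (i' := i') (by simp [hcd]) (by simp) (by omega) (by omega)

/-- There is no 7×7 Latin square that is both non-consecutive by king's move and
anti-king. -/
theorem stmt8 :
    ¬ ∃ M : Fin 7 → Fin 7 → ℕ, latin 7 M ∧
      ∀ p q : Fin 7 × Fin 7, kingAdj 7 p q →
        M p.1 p.2 ≠ M q.1 q.2 ∧ ¬ diffOne (M p.1 p.2) (M q.1 q.2) := by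
  rintro ⟨M, hlatin, hM : KingSeparated 7 M⟩
  have hdistinct : M 0 1 ≠ M 0 3 := fun h => absurd (hlatin.2.1 0 h) (by decide)
  have h1 := hlatin.1 0 1
  have h3 := hlatin.1 0 3
  rw [Finset.mem_Icc] at h1 h3
  have hodd : ¬ Even (1 : Fin 7).val ∧ ¬ Even (3 : Fin 7).val := by decide
  rcases (show M 0 1 < 7 ∨ M 0 3 < 7 by omega) with h | h
  · exact hodd.1 (hM.even_of_lt_seven hlatin (i' := 1) rfl h)
  · exact hodd.2 (hM.even_of_lt_seven hlatin (i' := 1) rfl h)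
end

section
/- For every even n > 6, there exists an n×n non-consecutive by king's move Latin square, and for every even n > 12, there exists an n×n non-consecutive by king's move Latin square that is also anti-king. In particular, if k and m are coprime to n with k, m, mk all not congruent to ±1 mod n, then the square with entry (i,j) = 1 + ((jk + imk) mod n) is such a square. -/
open Finset

lemma Nat.totient_le_totient_of_dvd {d n : ℕ} (h : d ∣ n) (hn : n ≠ 0) : d.totient ≤ n.totient :=
  Nat.le_of_dvd (Nat.totient_pos.2 (Nat.pos_of_ne_zero hn)) (Nat.totient_dvd_of_dvd h)

lemma Nat.six_le_totient_of_odd {q : ℕ} (hq : Odd q) (h7 : 7 ≤ q) : 6 ≤ q.totient := by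
  have odd_of_dvd : ∀ {p}, p ∣ q → p ≠ 2 := by
    rintro p hpq rfl
    exact Nat.not_even_iff_odd.2 hq (even_iff_two_dvd.2 hpq)
  obtain ⟨p, hp, hpq⟩ := Nat.exists_prime_and_dvd (by omega : q ≠ 1)
  have hp3 : 3 ≤ p := by have := hp.two_le; have := odd_of_dvd hpq; omega
  by_cases hp7 : 7 ≤ p
  · calc 6 ≤ p.totient := by rw [Nat.totient_prime hp]; omega
      _ ≤ q.totient := Nat.totient_le_totient_of_dvd hpq (by omega)
  -- Here `p ∈ {3, 5}`; then `q = p r` with `r > 1`, and `φ (p p') ≥ 6` for a prime `p' ∣ r`.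
  obtain ⟨r, rfl⟩ := hpq
  obtain ⟨p', hp', hp'r⟩ := Nat.exists_prime_and_dvd (show r ≠ 1 by rintro rfl; omega)
  have hp'3 : 3 ≤ p' := by
    have := hp'.two_le; have := odd_of_dvd (dvd_mul_of_dvd_right hp'r p); omega
  refine le_trans ?_ (Nat.totient_le_totient_of_dvd (Nat.mul_dvd_mul_left p hp'r) (by omega))
  have hp35 : p = 3 ∨ p = 5 := by
    interval_cases p <;> first | omega | exact absurd hp (by decide)
  rcases eq_or_ne p' p with rfl | hne
  · rw [Nat.totient_mul_of_prime_of_dvd hp' dvd_rfl, Nat.totient_prime hp']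
    rcases hp35 with rfl | rfl <;> norm_num
  · rw [Nat.totient_mul ((Nat.coprime_primes hp hp').2 hne.symm), Nat.totient_prime hp,
      Nat.totient_prime hp']
    rcases hp35 with rfl | rfl <;> omega

lemma Nat.two_lt_totient_of_even {n : ℕ} (hn : Even n) (h6 : 6 < n) : 2 < n.totient := by
  obtain ⟨m, rfl⟩ := hn
  rw [← two_mul] at h6 ⊢
  rcases m.even_or_odd with hm | hm
  · rw [Nat.totient_two_mul_of_even hm]
    obtain ⟨c, hc⟩ := Nat.totient_even (by omega : 2 < m)
    have := Nat.totient_pos.2 (by omega : 0 < m)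
    omega
  · rw [Nat.totient_two_mul_of_odd hm]
    rcases (by obtain ⟨c, rfl⟩ := hm; omega : m = 5 ∨ 7 ≤ m) with rfl | h7
    · rw [Nat.totient_prime (by norm_num)]; norm_num
    · have := Nat.six_le_totient_of_odd hm h7; omega

lemma Nat.four_lt_totient_of_even {n : ℕ} (hn : Even n) (h12 : 12 < n) : 4 < n.totient := by
  obtain ⟨m, rfl⟩ := hn
  rw [← two_mul] at h12 ⊢
  rcases m.even_or_odd with hm | hm
  · rw [Nat.totient_two_mul_of_even hm]
    have := Nat.two_lt_totient_of_even hm (by omega); omega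
  · rw [Nat.totient_two_mul_of_odd hm]
    have := Nat.six_le_totient_of_odd hm (by omega); omega

lemma ZMod.exists_natCast_isUnit_notMem {n : ℕ} (s : Finset (ZMod n)) (h : #s < n.totient) :
    ∃ a : ℕ, IsUnit (a : ZMod n) ∧ (a : ZMod n) ∉ s := by
  have : NeZero n := ⟨by rintro rfl; simp at h⟩
  suffices ∃ u : (ZMod n)ˣ, (u : ZMod n) ∉ s by
    obtain ⟨u, hu⟩ := this
    exact ⟨(u : ZMod n).val, by simp, by simpa using hu⟩
  by_contra! hs
  have := Finset.card_le_card_of_injOn (s := univ) (t := s) Units.val (fun u _ => hs u)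
    Units.val_injective.injOn
  rw [card_univ, ZMod.card_units_eq_totient] at this
  omega

lemma ZMod.not_isUnit_add_of_even {n : ℕ} (hn : Even n) {u v : ZMod n} (hu : IsUnit u)
    (hv : IsUnit v) : ¬IsUnit (u + v) := by
  -- Reduce modulo 2, where the only unit is `1` and `1 + 1 = 0`.
  let f := ZMod.castHom hn.two_dvd (ZMod 2)
  have unit_eq_one (x : ZMod n) (hx : IsUnit x) : f x = 1 :=
    (by decide : ∀ y : ZMod 2, y ≠ 0 → y = 1) _ (hx.map f).ne_zero
  intro huv
  have := unit_eq_one _ huv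
  rw [map_add, unit_eq_one u hu, unit_eq_one v hv] at this
  exact absurd this (by decide)

lemma diffOne.natCast_sub {R : Type*} [Ring R] {x y : ℕ} (h : diffOne x y) :
    (x : R) - y = 1 ∨ (x : R) - y = -1 := by
  rcases Int.natAbs_eq_iff.1 h with h | h
  · left; exact_mod_cast congrArg (Int.cast : ℤ → R) h
  · right; exact_mod_cast congrArg (Int.cast : ℤ → R) h

lemma kingAdj.symm {n : ℕ} {p q : Fin n × Fin n} (h : kingAdj n p q) : kingAdj n q p := by
  obtain ⟨hne, hi, hj⟩ := h
  exact ⟨hne.symm, by omega, by omega⟩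

section cellVal

variable {R : Type*} [CommRing R] {n : ℕ}

def cellVal (a b : R) (p : Fin n × Fin n) : R := p.2.val * a + p.1.val * b

def kingSteps (a b : R) : Set R := {a, b, a + b, a - b}

lemma cellVal_sub_mem_of_kingAdj (a b : R) {p q : Fin n × Fin n} (h : kingAdj n p q) :
    ∃ s ∈ kingSteps a b,
      cellVal a b p - cellVal a b q = s ∨ cellVal a b p - cellVal a b q = -s := by
  obtain ⟨hne, hi, hj⟩ := h
  have hsub : cellVal a b p - cellVal a b q
      = (((p.2.val : ℤ) - q.2.val : ℤ) : R) * a + (((p.1.val : ℤ) - q.1.val : ℤ) : R) * b := by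
    simp only [cellVal]; push_cast; ring
  rw [hsub]
  rcases (by omega : (p.1.val : ℤ) - q.1.val = -1 ∨ (p.1.val : ℤ) - q.1.val = 0 ∨
      (p.1.val : ℤ) - q.1.val = 1) with h1 | h1 | h1 <;>
    rcases (by omega : (p.2.val : ℤ) - q.2.val = -1 ∨ (p.2.val : ℤ) - q.2.val = 0 ∨
      (p.2.val : ℤ) - q.2.val = 1) with h2 | h2 | h2 <;>
    simp only [h1, h2, Int.cast_neg, Int.cast_one, Int.cast_zero]
  · exact ⟨a + b, by simp [kingSteps], Or.inr (by ring)⟩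
  · exact ⟨b, by simp [kingSteps], Or.inr (by ring)⟩
  · exact ⟨a - b, by simp [kingSteps], Or.inl (by ring)⟩
  · exact ⟨a, by simp [kingSteps], Or.inr (by ring)⟩
  · exact absurd (Prod.ext (Fin.ext (by omega)) (Fin.ext (by omega))) hne
  · exact ⟨a, by simp [kingSteps], Or.inl (by ring)⟩
  · exact ⟨a - b, by simp [kingSteps], Or.inr (by ring)⟩
  · exact ⟨b, by simp [kingSteps], Or.inl (by ring)⟩
  · exact ⟨a + b, by simp [kingSteps], Or.inl (by ring)⟩

lemma cellVal_sub_ne_of_kingAdj {a b c : R}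
    (hc : ∀ s ∈ kingSteps a b, s ≠ c ∧ s ≠ -c) {p q : Fin n × Fin n}
    (h : kingAdj n p q) : cellVal a b p - cellVal a b q ≠ c := by
  obtain ⟨s, hs, hsub | hsub⟩ := cellVal_sub_mem_of_kingAdj a b h <;> rw [hsub]
  · exact (hc s hs).1
  · exact fun h => (hc s hs).2 (neg_eq_iff_eq_neg.1 h)

end cellVal

section modSquare

variable {n a b : ℕ}

def modSquare (n a b : ℕ) (i j : Fin n) : ℕ := 1 + (j.val * a + i.val * b) % n

lemma natCast_modSquare (i j : Fin n) :
    (modSquare n a b i j : ZMod n) = 1 + cellVal (a : ZMod n) b (i, j) := by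
  simp [modSquare, cellVal]

lemma latin_modSquare (ha : IsUnit (a : ZMod n)) (hb : IsUnit (b : ZMod n)) :
    latin n (modSquare n a b) := by
  have val_inj {i j : Fin n} (h : (i.val : ZMod n) = j.val) : i = j := by
    have := congrArg ZMod.val h
    rwa [ZMod.val_cast_of_lt i.isLt, ZMod.val_cast_of_lt j.isLt, ← Fin.ext_iff] at this
  refine ⟨fun i j => ?_, fun i j₁ j₂ h => ?_, fun j i₁ i₂ h => ?_⟩
  · have := Nat.mod_lt (j.val * a + i.val * b) i.pos
    simp only [modSquare, Finset.mem_Icc]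
    omega
  · have h := congrArg (Nat.cast : ℕ → ZMod n) h
    simp only [natCast_modSquare, cellVal, add_left_cancel_iff, add_right_cancel_iff] at h
    exact val_inj (ha.mul_left_inj.1 h)
  · have h := congrArg (Nat.cast : ℕ → ZMod n) h
    simp only [natCast_modSquare, cellVal, add_left_cancel_iff] at h
    exact val_inj (hb.mul_left_inj.1 h)

lemma modSquare_ne_of_kingAdj (ha : (a : ZMod n) ≠ 0) (hb : (b : ZMod n) ≠ 0)
    (hab : (a : ZMod n) + b ≠ 0) (hab' : (a : ZMod n) - b ≠ 0) {p q : Fin n × Fin n}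
    (h : kingAdj n p q) : modSquare n a b p.1 p.2 ≠ modSquare n a b q.1 q.2 := by
  have hc : ∀ s ∈ kingSteps (a : ZMod n) b, s ≠ 0 ∧ s ≠ -0 := by
    rintro s (rfl | rfl | rfl | rfl) <;> simpa
  intro heq
  have heq := congrArg (Nat.cast : ℕ → ZMod n) heq
  rw [natCast_modSquare, natCast_modSquare, add_right_inj, ← sub_eq_zero, Prod.mk.eta,
    Prod.mk.eta] at heq
  exact cellVal_sub_ne_of_kingAdj hc h heq

lemma modSquare_not_diffOne_of_kingAdj (hn : Even n) (ha : IsUnit (a : ZMod n))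
    (hb : IsUnit (b : ZMod n)) (ha1 : (a : ZMod n) ≠ 1) (ha1' : (a : ZMod n) ≠ -1)
    (hb1 : (b : ZMod n) ≠ 1) (hb1' : (b : ZMod n) ≠ -1) {p q : Fin n × Fin n}
    (h : kingAdj n p q) : ¬diffOne (modSquare n a b p.1 p.2) (modSquare n a b q.1 q.2) := by
  have ne_of_not_isUnit {s : ZMod n} (hs : ¬IsUnit s) : s ≠ 1 ∧ s ≠ -1 :=
    ⟨by rintro rfl; exact hs isUnit_one, by rintro rfl; exact hs isUnit_one.neg⟩
  have hc : ∀ s ∈ kingSteps (a : ZMod n) b, s ≠ 1 ∧ s ≠ -1 := by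
    rintro s (rfl | rfl | rfl | rfl)
    · exact ⟨ha1, ha1'⟩
    · exact ⟨hb1, hb1'⟩
    · exact ne_of_not_isUnit (ZMod.not_isUnit_add_of_even hn ha hb)
    · rw [sub_eq_add_neg]
      exact ne_of_not_isUnit (ZMod.not_isUnit_add_of_even hn ha hb.neg)
  intro hd
  rcases hd.natCast_sub (R := ZMod n) with hd | hd <;>
    rw [natCast_modSquare, natCast_modSquare, add_sub_add_left_eq_sub, Prod.mk.eta,
      Prod.mk.eta] at hd
  · exact cellVal_sub_ne_of_kingAdj hc h hd
  · exact cellVal_sub_ne_of_kingAdj hc h.symm (by rw [← neg_sub, hd, neg_neg])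

lemma modSquare_ne_and_not_diffOne_of_kingAdj (hn : Even n) (ha : IsUnit (a : ZMod n))
    (hb : IsUnit (b : ZMod n)) (ha1 : (a : ZMod n) ≠ 1) (ha1' : (a : ZMod n) ≠ -1)
    (hb1 : (b : ZMod n) ≠ 1) (hb1' : (b : ZMod n) ≠ -1) (hba : (b : ZMod n) ≠ a)
    (hba' : (b : ZMod n) ≠ -a)
    {p q : Fin n × Fin n} (h : kingAdj n p q) :
    modSquare n a b p.1 p.2 ≠ modSquare n a b q.1 q.2 ∧
      ¬diffOne (modSquare n a b p.1 p.2) (modSquare n a b q.1 q.2) := by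
  have : Nontrivial (ZMod n) := ZMod.nontrivial_iff.2 (by rintro rfl; exact Nat.not_even_one hn)
  refine ⟨modSquare_ne_of_kingAdj ha.ne_zero hb.ne_zero ?_ ?_ h,
    modSquare_not_diffOne_of_kingAdj hn ha hb ha1 ha1' hb1 hb1' h⟩
  · exact fun h => hba' (eq_neg_of_add_eq_zero_right h)
  · exact fun h => hba (sub_eq_zero.1 h).symm

end modSquare

/-- For even `n > 6` there is a non-consecutive by king's move Latin square, and for
even `n > 12` one that is also anti-king. In particular, if `k`, `m` are coprime to `n`
with `k`, `m`, `mk` all not congruent to `±1 (mod n)`, then the square with entry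
`(i,j) = 1 + ((jk + imk) mod n)` is such a square. -/
theorem stmt9 (n : ℕ) (hn : Even n) :
    (6 < n → ∃ M : Fin n → Fin n → ℕ, latin n M ∧
      ∀ p q : Fin n × Fin n, kingAdj n p q → ¬ diffOne (M p.1 p.2) (M q.1 q.2)) ∧
    (12 < n → ∃ M : Fin n → Fin n → ℕ, latin n M ∧
      ∀ p q : Fin n × Fin n, kingAdj n p q →
        M p.1 p.2 ≠ M q.1 q.2 ∧ ¬ diffOne (M p.1 p.2) (M q.1 q.2)) ∧
    (∀ k m : ℕ, Nat.Coprime k n → Nat.Coprime m n →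
      (k : ZMod n) ≠ 1 → (k : ZMod n) ≠ -1 →
      (m : ZMod n) ≠ 1 → (m : ZMod n) ≠ -1 →
      ((m * k : ℕ) : ZMod n) ≠ 1 → ((m * k : ℕ) : ZMod n) ≠ -1 →
      latin n (fun i j => 1 + (j.val * k + i.val * (m * k)) % n) ∧
      ∀ p q : Fin n × Fin n, kingAdj n p q →
        (1 + (p.2.val * k + p.1.val * (m * k)) % n) ≠
          (1 + (q.2.val * k + q.1.val * (m * k)) % n) ∧
        ¬ diffOne (1 + (p.2.val * k + p.1.val * (m * k)) % n)
            (1 + (q.2.val * k + q.1.val * (m * k)) % n)) := by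
  refine ⟨fun h6 => ?_, fun h12 => ?_, fun k m hk hm hk1 hk1' hm1 hm1' hmk1 hmk1' => ?_⟩
  · obtain ⟨a, ha, ha1⟩ := ZMod.exists_natCast_isUnit_notMem ({1, -1} : Finset (ZMod n))
      (card_le_two.trans_lt (Nat.two_lt_totient_of_even hn h6))
    simp only [mem_insert, mem_singleton, not_or] at ha1
    exact ⟨modSquare n a a, latin_modSquare ha ha,
      fun p q h => modSquare_not_diffOne_of_kingAdj hn ha ha ha1.1 ha1.2 ha1.1 ha1.2 h⟩
  · have hφ := Nat.four_lt_totient_of_even hn h12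
    obtain ⟨a, ha, ha1⟩ := ZMod.exists_natCast_isUnit_notMem ({1, -1} : Finset (ZMod n))
      (card_le_two.trans_lt (by omega))
    obtain ⟨b, hb, hb1⟩ :=
      ZMod.exists_natCast_isUnit_notMem {1, -1, (a : ZMod n), -(a : ZMod n)}
        (card_le_four.trans_lt hφ)
    simp only [mem_insert, mem_singleton, not_or] at ha1 hb1
    obtain ⟨hb1, hb1', hba, hba'⟩ := hb1
    exact ⟨modSquare n a b, latin_modSquare ha hb, fun p q h =>
      modSquare_ne_and_not_diffOne_of_kingAdj hn ha hb ha1.1 ha1.2 hb1 hb1' hba hba' h⟩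
  · have hku := (ZMod.isUnit_iff_coprime k n).2 hk
    have hmku := (ZMod.isUnit_iff_coprime (m * k) n).2 (hm.mul_left hk)
    refine ⟨latin_modSquare hku hmku, fun p q h =>
      modSquare_ne_and_not_diffOne_of_kingAdj hn hku hmku hk1 hk1' hmk1 hmk1' ?_ ?_ h⟩
    · rw [Nat.cast_mul]
      exact fun h => hm1 (hku.mul_left_inj.1 (h.trans (one_mul _).symm))
    · rw [Nat.cast_mul]
      exact fun h => hm1' (hku.mul_left_inj.1 (h.trans (neg_one_mul _).symm))
end

section
/- For n > 2, there is no consecutive Latin square of order n: no n×n Latin square in which every pair of orthogonally adjacent cells contains values differing by exactly 1. -/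
/-! A row of a consecutive Latin square is a walk through `n` distinct values with steps `±1`.
It can never turn back, since that would repeat a value, so it runs monotonically through
`1, …, n` or `n, …, 1`; in particular every row starts with `1` or `n`. The first two entries of
the first column are then both in `{1, n}` and differ by `1`, which forces `n = 2`. -/

theorem sub_eq_sub_of_diffOne_of_ne {a b c : ℕ} (hab : diffOne a b) (hbc : diffOne b c)
    (hac : c ≠ a) : (c : ℤ) - b = b - a := by
  unfold diffOne at hab hbc
  omega

section Walk

variable {f : ℕ → ℕ} {m : ℕ}

theorem step_eq_first_step_of_diffOne (hstep : ∀ k < m, diffOne (f k) (f (k + 1)))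
    (hne : ∀ k, k + 2 ≤ m → f (k + 2) ≠ f k) :
    ∀ k < m, (f (k + 1) : ℤ) - f k = f 1 - f 0 := by
  intro k hk
  induction k with
  | zero => rfl
  | succ k ih =>
    rw [sub_eq_sub_of_diffOne_of_ne (hstep k (by omega)) (hstep (k + 1) hk) (hne k hk),
      ih (by omega)]

theorem eq_add_mul_of_diffOne (hstep : ∀ k < m, diffOne (f k) (f (k + 1)))
    (hne : ∀ k, k + 2 ≤ m → f (k + 2) ≠ f k) :
    ∀ k ≤ m, (f k : ℤ) = f 0 + k * (f 1 - f 0) := by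
  intro k hk
  induction k with
  | zero => simp
  | succ k ih =>
    have hsucc := step_eq_first_step_of_diffOne hstep hne k hk
    push_cast
    linear_combination hsucc + ih (by omega)

theorem head_eq_one_or_eq_of_diffOne (hstep : ∀ k < m, diffOne (f k) (f (k + 1)))
    (hne : ∀ k, k + 2 ≤ m → f (k + 2) ≠ f k) (hrange : ∀ k ≤ m, f k ∈ Finset.Icc 1 (m + 1)) :
    f 0 = 1 ∨ f 0 = m + 1 := by
  have h0 := Finset.mem_Icc.mp (hrange 0 (Nat.zero_le m))
  have hm := Finset.mem_Icc.mp (hrange m le_rfl)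
  have hlast := eq_add_mul_of_diffOne hstep hne m le_rfl
  rcases Nat.eq_zero_or_pos m with rfl | hpos
  · omega
  have hfirst : diffOne (f 0) (f 1) := hstep 0 hpos
  unfold diffOne at hfirst
  rcases (by omega : (f 1 : ℤ) - f 0 = 1 ∨ (f 1 : ℤ) - f 0 = -1) with hd | hd <;>
    rw [hd] at hlast <;> omega

end Walk

theorem row_head_eq_one_or_eq {m : ℕ} (f : Fin (m + 1) → ℕ)
    (hrange : ∀ j, f j ∈ Finset.Icc 1 (m + 1)) (hinj : Function.Injective f)
    (hstep : ∀ j k : Fin (m + 1), j.val + 1 = k.val → diffOne (f j) (f k)) :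
    f 0 = 1 ∨ f 0 = m + 1 := by
  have hclamp : ∀ k ≤ m, (Fin.clamp k m : ℕ) = k := fun k hk => by simpa using hk
  refine head_eq_one_or_eq_of_diffOne (f := fun k => f (Fin.clamp k m)) (m := m)
    (fun k hk => hstep _ _ ?_) (fun k hk heq => ?_) (fun k _ => hrange _)
  · rw [hclamp k hk.le, hclamp (k + 1) hk]
  · have := congrArg Fin.val (hinj heq)
    rw [hclamp (k + 2) hk, hclamp k (by omega)] at this
    omega

/-- For `n > 2` there is no consecutive Latin square of order `n`. -/
theorem stmt10 (n : ℕ) (hn : 2 < n) :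
    ¬ ∃ M : Fin n → Fin n → ℕ, latin n M ∧
      ∀ p q : Fin n × Fin n, orthAdj n p q → diffOne (M p.1 p.2) (M q.1 q.2) := by
  rintro ⟨M, ⟨hrange, hrow, -⟩, hconsec⟩
  obtain ⟨m, rfl⟩ : ∃ m, n = m + 1 := ⟨n - 1, by omega⟩
  have hhead : ∀ i, M i 0 = 1 ∨ M i 0 = m + 1 := fun i =>
    row_head_eq_one_or_eq (M i) (hrange i) (hrow i)
      fun j k hjk => hconsec (i, j) (i, k) (Or.inl ⟨rfl, Or.inl hjk⟩)
  have hcol := hconsec (0, 0) (⟨1, by omega⟩, 0) (Or.inr ⟨rfl, Or.inl rfl⟩)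
  unfold diffOne at hcol
  rcases hhead 0 with h0 | h0 <;> rcases hhead ⟨1, by omega⟩ with h1 | h1 <;>
    simp only [h0, h1] at hcol <;> omega
end

section
/- Every modular consecutive Latin square of order n > 4 is either left-cyclic or right-cyclic: each row is the cyclic shift by 1 (consistently left or consistently right) of the previous row. -/
private lemma auxConst {n : ℕ} (hn : 4 < n) (f : Fin n → ZMod n)
    (hinj : Function.Injective f)
    (hstep : ∀ k : ℕ, ∀ h : k + 1 < n,
      f ⟨k + 1, h⟩ - f ⟨k, by omega⟩ = 1 ∨ f ⟨k + 1, h⟩ - f ⟨k, by omega⟩ = -1) :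
    ∀ k : ℕ, ∀ h : k + 1 < n,
      f ⟨k + 1, h⟩ - f ⟨k, by omega⟩ = f ⟨1, by omega⟩ - f ⟨0, by omega⟩ := by
  intro k
  induction k with
  | zero => intro h; rfl
  | succ k ih =>
    intro h
    have hk : k + 1 < n := by omega
    have ih' := ih hk
    have hne : f ⟨k + 1 + 1, h⟩ ≠ f ⟨k, by omega⟩ := by
      intro hcon
      have := hinj hcon
      rw [Fin.mk.injEq] at this
      omega
    rcases hstep (k + 1) h with e2 | e2 <;> rcases hstep k hk with e1 | e1
    · linear_combination e2 + ih' - e1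
    · exact absurd (by linear_combination e2 + e1) hne
    · exact absurd (by linear_combination e2 + e1) hne
    · linear_combination e2 + ih' - e1

private lemma auxFormula {n : ℕ} (hn : 4 < n) (f : Fin n → ZMod n)
    (hconst : ∀ k : ℕ, ∀ h : k + 1 < n,
      f ⟨k + 1, h⟩ - f ⟨k, by omega⟩ = f ⟨1, by omega⟩ - f ⟨0, by omega⟩) :
    ∀ k : ℕ, ∀ h : k < n,
      f ⟨k, h⟩ = f ⟨0, by omega⟩ +
        (k : ZMod n) * (f ⟨1, by omega⟩ - f ⟨0, by omega⟩) := by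
  intro k
  induction k with
  | zero => intro h; simp
  | succ k ih =>
    intro h
    have hk : k < n := by omega
    have hc := hconst k h
    have ih' := ih hk
    push_cast
    linear_combination hc + ih'

/-- Every modular consecutive Latin square of order `n > 4` is left- or right-cyclic. -/
theorem stmt11 (n : ℕ) (hn : 4 < n) (M : Fin n → Fin n → ℕ) (hL : latin n M)
    (hMC : ∀ p q : Fin n × Fin n, orthAdj n p q →
      ((M p.1 p.2 : ZMod n) - (M q.1 q.2 : ZMod n) = 1 ∨
       (M p.1 p.2 : ZMod n) - (M q.1 q.2 : ZMod n) = -1)) :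
    (∀ i i' j j' : Fin n, i'.val = i.val + 1 → j'.val = (j.val + 1) % n →
       M i' j = M i j') ∨
    (∀ i i' j j' : Fin n, i'.val = i.val + 1 → j'.val = (j.val + 1) % n →
       M i' j' = M i j) := by
  haveI : NeZero n := ⟨by omega⟩
  obtain ⟨hmem, hrowinj, hcolinj⟩ := hL
  -- casting to ZMod n is injective on Icc 1 n
  have key : ∀ a b : ℕ, a ∈ Finset.Icc 1 n → b ∈ Finset.Icc 1 n →
      ((a : ZMod n) = (b : ZMod n)) → a = b := by
    intro a b ha hb h
    rw [Finset.mem_Icc] at ha hb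
    rw [ZMod.natCast_eq_natCast_iff'] at h
    have ha' : a % n = if a = n then 0 else a := by
      rcases eq_or_lt_of_le ha.2 with h' | h'
      · simp [h', Nat.mod_self]
      · simp [Nat.mod_eq_of_lt h', Nat.ne_of_lt h']
    have hb' : b % n = if b = n then 0 else b := by
      rcases eq_or_lt_of_le hb.2 with h' | h'
      · simp [h', Nat.mod_self]
      · simp [Nat.mod_eq_of_lt h', Nat.ne_of_lt h']
    rw [ha', hb'] at h
    split_ifs at h <;> omega
  set g : Fin n → Fin n → ZMod n := fun i j => ((M i j : ℕ) : ZMod n) with hg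
  have grow : ∀ i : Fin n, Function.Injective (g i) := by
    intro i j j' h
    exact hrowinj i (key _ _ (hmem i j) (hmem i j') h)
  have gcol : ∀ j : Fin n, Function.Injective fun i => g i j := by
    intro j i i' h
    exact hcolinj j (key _ _ (hmem i j) (hmem i' j) h)
  have hrow : ∀ (i : Fin n) (k : ℕ) (h : k + 1 < n),
      g i ⟨k + 1, h⟩ - g i ⟨k, by omega⟩ = 1 ∨
      g i ⟨k + 1, h⟩ - g i ⟨k, by omega⟩ = -1 :=
    fun i k h => hMC (i, ⟨k + 1, h⟩) (i, ⟨k, by omega⟩) (Or.inl ⟨rfl, Or.inr rfl⟩)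
  have hcol : ∀ (j : Fin n) (k : ℕ) (h : k + 1 < n),
      g ⟨k + 1, h⟩ j - g ⟨k, by omega⟩ j = 1 ∨
      g ⟨k + 1, h⟩ j - g ⟨k, by omega⟩ j = -1 :=
    fun j k h => hMC (⟨k + 1, h⟩, j) (⟨k, by omega⟩, j) (Or.inr ⟨rfl, Or.inr rfl⟩)
  -- row and column increments
  set s : Fin n → ZMod n := fun i => g i ⟨1, by omega⟩ - g i ⟨0, by omega⟩ with hs
  set t : Fin n → ZMod n := fun j => g ⟨1, by omega⟩ j - g ⟨0, by omega⟩ j with ht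
  have rowconst : ∀ (i : Fin n) (k : ℕ) (h : k + 1 < n),
      g i ⟨k + 1, h⟩ - g i ⟨k, by omega⟩ = s i :=
    fun i => auxConst hn (g i) (grow i) (hrow i)
  have colconst : ∀ (j : Fin n) (k : ℕ) (h : k + 1 < n),
      g ⟨k + 1, h⟩ j - g ⟨k, by omega⟩ j = t j :=
    fun j => auxConst hn (fun a => g a j) (gcol j) (hcol j)
  have smem : ∀ i : Fin n, s i = 1 ∨ s i = -1 := fun i => hrow i 0 (by omega)
  have tmem : ∀ j : Fin n, t j = 1 ∨ t j = -1 := fun j => hcol j 0 (by omega)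
  -- the square relation
  have hsq : ∀ (a b : ℕ) (ha : a + 1 < n) (hb : b + 1 < n),
      s ⟨a + 1, ha⟩ - s ⟨a, by omega⟩ = t ⟨b + 1, hb⟩ - t ⟨b, by omega⟩ := by
    intro a b ha hb
    have e1 := rowconst ⟨a + 1, ha⟩ b hb
    have e2 := rowconst ⟨a, by omega⟩ b hb
    have e3 := colconst ⟨b + 1, hb⟩ a ha
    have e4 := colconst ⟨b, by omega⟩ a ha
    linear_combination e2 - e1 + e3 - e4
  set c : ZMod n := t ⟨1, by omega⟩ - t ⟨0, by omega⟩ with hc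
  have hscst : ∀ (a : ℕ) (ha : a + 1 < n), s ⟨a + 1, ha⟩ - s ⟨a, by omega⟩ = c :=
    fun a ha => hsq a 0 ha (by omega)
  have htcst : ∀ (b : ℕ) (hb : b + 1 < n), t ⟨b + 1, hb⟩ - t ⟨b, by omega⟩ = c := by
    intro b hb
    have := hsq 0 b (by omega) hb
    have h0 := hscst 0 (by omega)
    linear_combination h0 - this
  -- c = 0
  have h2 : (2 : ZMod n) ≠ 0 := by
    intro h
    have h' := (ZMod.natCast_eq_zero_iff 2 n).mp (by exact_mod_cast h)
    have := Nat.le_of_dvd (by norm_num) h'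
    omega
  have h4 : (4 : ZMod n) ≠ 0 := by
    intro h
    have h' := (ZMod.natCast_eq_zero_iff 4 n).mp (by exact_mod_cast h)
    have := Nat.le_of_dvd (by norm_num) h'
    omega
  have hc0 : c = 0 := by
    have e1 : s ⟨1, by omega⟩ - s ⟨0, by omega⟩ = c := hscst 0 (by omega)
    have e2 : s ⟨2, by omega⟩ - s ⟨1, by omega⟩ = c := hscst 1 (by omega)
    rcases smem ⟨0, by omega⟩ with h0 | h0 <;>
      rcases smem ⟨1, by omega⟩ with h1 | h1 <;>
      rcases smem ⟨2, by omega⟩ with hh2 | hh2 <;>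
      rw [h0, h1] at e1 <;> rw [h1, hh2] at e2
    · linear_combination -e1
    · linear_combination -e1
    · exact absurd (by linear_combination e2 - e1) h4
    · exact absurd (by linear_combination e2 - e1) h2
    · exact absurd (by linear_combination e1 - e2) h2
    · exact absurd (by linear_combination e1 - e2) h4
    · linear_combination -e1
    · linear_combination -e1
  -- all row increments and all column increments are equal
  have sconst : ∀ (k : ℕ) (h : k < n), s ⟨k, h⟩ = s ⟨0, by omega⟩ := by
    intro k
    induction k with
    | zero => intro h; rfl
    | succ k ih =>
      intro h
      have hk : k < n := by omega
      have := hscst k h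
      rw [hc0] at this
      rw [← ih hk]
      linear_combination this
  have tconst : ∀ (k : ℕ) (h : k < n), t ⟨k, h⟩ = t ⟨0, by omega⟩ := by
    intro k
    induction k with
    | zero => intro h; rfl
    | succ k ih =>
      intro h
      have hk : k < n := by omega
      have := htcst k h
      rw [hc0] at this
      rw [← ih hk]
      linear_combination this
  set s0 : ZMod n := s ⟨0, by omega⟩ with hs0
  set t0 : ZMod n := t ⟨0, by omega⟩ with ht0
  -- master formula
  have master : ∀ i j : Fin n,
      g i j = g ⟨0, by omega⟩ ⟨0, by omega⟩ + (i.val : ZMod n) * t0 +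
        (j.val : ZMod n) * s0 := by
    intro i j
    have hcolF : g i j = g ⟨0, by omega⟩ j + (i.val : ZMod n) * t j := by
      have := auxFormula hn (fun a => g a j) (colconst j) i.val i.isLt
      simpa [ht] using this
    have hrowF : g ⟨0, by omega⟩ j =
        g ⟨0, by omega⟩ ⟨0, by omega⟩ + (j.val : ZMod n) * s0 := by
      have := auxFormula hn (g ⟨0, by omega⟩) (rowconst ⟨0, by omega⟩) j.val j.isLt
      simpa [hs0, hs] using this
    have htj : t j = t0 := by
      have := tconst j.val j.isLt
      simpa [ht0] using this
    rw [hcolF, htj, hrowF]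
    ring
  have smem0 := smem ⟨0, by omega⟩
  have tmem0 := tmem ⟨0, by omega⟩
  rw [← hs0] at smem0
  rw [← ht0] at tmem0
  have main : ∀ (hts : t0 = s0 ∨ t0 = -s0), True := fun _ => trivial
  -- final case split
  have final : (t0 = s0) ∨ (t0 = -s0) := by
    rcases smem0 with h | h <;> rcases tmem0 with h' | h' <;>
      rw [h, h'] <;> simp
  rcases final with hts | hts
  · left
    intro i i' j j' hi' hj'
    apply key _ _ (hmem i' j) (hmem i j')
    have hv1 : (i'.val : ZMod n) = (i.val : ZMod n) + 1 := by
      rw [hi']; push_cast; ring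
    have hv2 : (j'.val : ZMod n) = (j.val : ZMod n) + 1 := by
      rw [hj', ZMod.natCast_mod]; push_cast; ring
    have e1 := master i' j
    have e2 := master i j'
    show g i' j = g i j'
    rw [e1, e2]
    linear_combination t0 * hv1 - s0 * hv2 + hts
  · right
    intro i i' j j' hi' hj'
    apply key _ _ (hmem i' j') (hmem i j)
    have hv1 : (i'.val : ZMod n) = (i.val : ZMod n) + 1 := by
      rw [hi']; push_cast; ring
    have hv2 : (j'.val : ZMod n) = (j.val : ZMod n) + 1 := by
      rw [hj', ZMod.natCast_mod]; push_cast; ring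
    have e1 := master i' j'
    have e2 := master i j
    show g i' j' = g i j
    rw [e1, e2]
    linear_combination t0 * hv1 + s0 * hv2 + hts
end

section
/- For n > 4, there are exactly 4n modular consecutive Latin squares of order n. -/
open Finset

namespace ZMod

variable {n : ℕ}

/-- The representative of `x` in `{1, …, n}` (so `0` is represented by `n`). -/
def valIcc (x : ZMod n) : ℕ := (x - 1).val + 1

@[simp]
lemma natCast_valIcc [NeZero n] (x : ZMod n) : (x.valIcc : ZMod n) = x := by
  simp [valIcc]

lemma valIcc_mem_Icc [NeZero n] (x : ZMod n) : x.valIcc ∈ Icc 1 n := by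
  have := (x - 1).val_lt
  simp only [valIcc, mem_Icc]
  omega

lemma valIcc_natCast {a : ℕ} (ha : a ∈ Icc 1 n) : (a : ZMod n).valIcc = a := by
  obtain ⟨b, rfl⟩ : ∃ b, a = b + 1 := ⟨a - 1, by grind⟩
  simp [valIcc, val_cast_of_lt (by grind : b < n)]

lemma natCast_injOn_Icc : Set.InjOn (Nat.cast : ℕ → ZMod n) (Icc 1 n) := fun a ha b hb h => by
  rw [← valIcc_natCast (mem_coe.1 ha), ← valIcc_natCast (mem_coe.1 hb), h]

lemma natCast_ne_zero_of_lt {k : ℕ} (h0 : 0 < k) (hk : k < n) : (k : ZMod n) ≠ 0 := by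
  rw [Ne, natCast_eq_zero_iff]
  exact fun hd => absurd (Nat.le_of_dvd h0 hd) (by omega)

lemma natCast_finVal_injective : Function.Injective fun i : Fin n => (i.val : ZMod n) :=
  fun i j h => Fin.ext <| by
    simpa [val_cast_of_lt i.isLt, val_cast_of_lt j.isLt] using congrArg ZMod.val h

end ZMod

section PlusMinusOne

variable {R : Type*} [CommRing R]

lemma add_eq_zero_of_ne_of_eq_one_or_neg_one {x y : R} (hx : x = 1 ∨ x = -1)
    (hy : y = 1 ∨ y = -1) (h : x ≠ y) : x + y = 0 := by
  rcases hx with rfl | rfl <;> rcases hy with rfl | rfl <;> simp_all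

lemma eq_of_add_eq_two_mul_of_eq_one_or_neg_one (h2 : (2 : R) ≠ 0) (h4 : (4 : R) ≠ 0)
    {x y z : R} (hx : x = 1 ∨ x = -1) (hy : y = 1 ∨ y = -1) (hz : z = 1 ∨ z = -1)
    (h : x + z = 2 * y) : x = y := by
  rcases hx with rfl | rfl <;> rcases hy with rfl | rfl <;> rcases hz with rfl | rfl <;>
    first
    | rfl
    | exact absurd (by linear_combination h) h2
    | exact absurd (by linear_combination -h) h2
    | exact absurd (by linear_combination h) h4
    | exact absurd (by linear_combination -h) h4

lemma exists_intCast_unit_eq {x : R} (hx : x = 1 ∨ x = -1) : ∃ u : ℤˣ, ((u : ℤ) : R) = x := by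
  rcases hx with rfl | rfl
  exacts [⟨1, by simp⟩, ⟨-1, by simp⟩]

lemma intCast_units_injective (h2 : (2 : R) ≠ 0) :
    Function.Injective fun u : ℤˣ => ((u : ℤ) : R) := by
  intro u v h
  rcases Int.units_eq_one_or u with rfl | rfl <;> rcases Int.units_eq_one_or v with rfl | rfl
  all_goals first
    | rfl
    | simp only [Units.val_one, Units.val_neg, Int.cast_one, Int.cast_neg] at h
      first
      | exact absurd (by linear_combination h) h2
      | exact absurd (by linear_combination -h) h2

lemma intCast_unit_mul_sub_eq_one_or_neg_one (u : ℤˣ) {a b : ℕ} (h : a + 1 = b ∨ b + 1 = a) :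
    ((u : ℤ) : R) * a - (u : ℤ) * b = 1 ∨ ((u : ℤ) : R) * a - (u : ℤ) * b = -1 := by
  rcases Int.units_eq_one_or u with rfl | rfl <;> rcases h with rfl | rfl <;> push_cast <;>
    first
    | left; ring1
    | right; ring1

lemma eq_add_mul_of_sub_eq_one_or_neg_one {N : ℕ} {f : ℕ → R}
    (hstep : ∀ k, k + 1 < N → f (k + 1) - f k = 1 ∨ f (k + 1) - f k = -1)
    (hback : ∀ k, k + 2 < N → f (k + 2) ≠ f k) :
    ∀ k < N, f k = f 0 + k * (f 1 - f 0) := by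
  have hconst : ∀ k, k + 1 < N → f (k + 1) - f k = f 1 - f 0 := by
    intro k
    induction k with
    | zero => simp
    | succ k ih =>
      intro hk
      rw [← ih (by omega)]
      by_contra hne
      have := add_eq_zero_of_ne_of_eq_one_or_neg_one (hstep (k + 1) hk) (hstep k (by omega)) hne
      exact hback k hk (by linear_combination this)
  intro k
  induction k with
  | zero => simp
  | succ k ih =>
    intro hk
    push_cast
    linear_combination hconst k hk + ih (by omega)

end PlusMinusOne

section Square

variable {n : ℕ}

def IsModConsecutive (n : ℕ) (M : Fin n → Fin n → ℕ) : Prop :=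
  ∀ p q : Fin n × Fin n, orthAdj n p q →
    ((M p.1 p.2 : ZMod n) - (M q.1 q.2 : ZMod n) = 1 ∨
     (M p.1 p.2 : ZMod n) - (M q.1 q.2 : ZMod n) = -1)

def linearSquare (n : ℕ) (c : ZMod n) (σ τ : ℤˣ) : Fin n → Fin n → ℕ :=
  fun i j =>
    ZMod.valIcc (c + ((σ : ℤ) : ZMod n) * (i.val : ZMod n) + ((τ : ℤ) : ZMod n) * (j.val : ZMod n))

@[simp]
lemma natCast_linearSquare [NeZero n] (c : ZMod n) (σ τ : ℤˣ) (i j : Fin n) :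
    (linearSquare n c σ τ i j : ZMod n) =
      c + ((σ : ℤ) : ZMod n) * (i.val : ZMod n) + ((τ : ℤ) : ZMod n) * (j.val : ZMod n) :=
  ZMod.natCast_valIcc _

lemma latin_linearSquare [NeZero n] (c : ZMod n) (σ τ : ℤˣ) : latin n (linearSquare n c σ τ) := by
  refine ⟨fun i j => ZMod.valIcc_mem_Icc _, fun i j j' h => ?_, fun j i i' h => ?_⟩
  · apply ZMod.natCast_finVal_injective
    have := congrArg (Nat.cast : ℕ → ZMod n) h
    rcases Int.units_eq_one_or τ with rfl | rfl <;> simpa using this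
  · apply ZMod.natCast_finVal_injective
    have := congrArg (Nat.cast : ℕ → ZMod n) h
    rcases Int.units_eq_one_or σ with rfl | rfl <;> simpa using this

lemma isModConsecutive_linearSquare [NeZero n] (c : ZMod n) (σ τ : ℤˣ) :
    IsModConsecutive n (linearSquare n c σ τ) := by
  rintro ⟨i, j⟩ ⟨i', j'⟩ (⟨rfl, h⟩ | ⟨rfl, h⟩) <;> simp only [natCast_linearSquare]
  · convert intCast_unit_mul_sub_eq_one_or_neg_one τ h using 2 <;> ring
  · convert intCast_unit_mul_sub_eq_one_or_neg_one σ h using 2 <;> ring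

lemma linearSquare_injective (hn : 2 < n) :
    Function.Injective fun x : ZMod n × ℤˣ × ℤˣ => linearSquare n x.1 x.2.1 x.2.2 := by
  have : NeZero n := ⟨by omega⟩
  have h2 : (2 : ZMod n) ≠ 0 := by
    exact_mod_cast ZMod.natCast_ne_zero_of_lt (k := 2) (by omega) hn
  rintro ⟨c, σ, τ⟩ ⟨c', σ', τ'⟩ h
  have hcell (i j : Fin n) := congrArg (fun M => (M i j : ZMod n)) h
  have h00 := hcell ⟨0, by omega⟩ ⟨0, by omega⟩
  have h10 := hcell ⟨1, by omega⟩ ⟨0, by omega⟩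
  have h01 := hcell ⟨0, by omega⟩ ⟨1, by omega⟩
  simp only [natCast_linearSquare, Nat.cast_zero, Nat.cast_one, mul_zero, mul_one, add_zero]
    at h00 h10 h01
  subst h00
  simp only [add_right_inj] at h10 h01
  rw [intCast_units_injective h2 h10, intCast_units_injective h2 h01]

end Square

section Structure

variable {n : ℕ} {M : Fin n → Fin n → ℕ}

lemma latin.transpose (hM : latin n M) : latin n fun i j => M j i :=
  ⟨fun i j => hM.1 j i, hM.2.2, hM.2.1⟩

lemma IsModConsecutive.transpose (hc : IsModConsecutive n M) :
    IsModConsecutive n fun i j => M j i :=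
  fun p q h => hc p.swap q.swap (by unfold orthAdj at h ⊢; tauto)

variable [NeZero n]

open Fin.NatCast

/-- The indices are natural numbers, reduced modulo `n`. -/
def entryMod (M : Fin n → Fin n → ℕ) (i j : ℕ) : ZMod n := M (i : Fin n) (j : Fin n)

lemma IsModConsecutive.entryMod_succ_sub (hc : IsModConsecutive n M) (i : ℕ) {k : ℕ}
    (hk : k + 1 < n) :
    entryMod M i (k + 1) - entryMod M i k = 1 ∨ entryMod M i (k + 1) - entryMod M i k = -1 :=
  hc (i, (k + 1 : ℕ)) (i, k) <| Or.inl
    ⟨rfl, Or.inr <| by rw [Fin.val_cast_of_lt hk, Fin.val_cast_of_lt (by omega)]⟩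

lemma latin.entryMod_add_two_ne (hM : latin n M) (i : ℕ) {k : ℕ} (hk : k + 2 < n) :
    entryMod M i (k + 2) ≠ entryMod M i k := fun h => by
  have := hM.2.1 _ (ZMod.natCast_injOn_Icc (hM.1 _ _) (hM.1 _ _) h)
  rw [Fin.ext_iff, Fin.val_cast_of_lt hk, Fin.val_cast_of_lt (by omega)] at this
  omega

lemma IsModConsecutive.entryMod_row (hM : latin n M) (hc : IsModConsecutive n M) (i : ℕ) :
    ∀ k < n, entryMod M i k = entryMod M i 0 + k * (entryMod M i 1 - entryMod M i 0) :=
  eq_add_mul_of_sub_eq_one_or_neg_one (fun _ hk => hc.entryMod_succ_sub i hk)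
    (fun _ hk => hM.entryMod_add_two_ne i hk)

lemma IsModConsecutive.entryMod_col (hM : latin n M) (hc : IsModConsecutive n M) (j : ℕ) :
    ∀ k < n, entryMod M k j = entryMod M 0 j + k * (entryMod M 1 j - entryMod M 0 j) :=
  hc.transpose.entryMod_row hM.transpose j

end Structure

theorem IsModConsecutive.eq_linearSquare {n : ℕ} (hn : 2 < n) (h4 : (4 : ZMod n) ≠ 0)
    {M : Fin n → Fin n → ℕ} (hM : latin n M) (hc : IsModConsecutive n M) :
    ∃ c σ τ, M = linearSquare n c σ τ := by
  have : NeZero n := ⟨by omega⟩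
  have h2 : (2 : ZMod n) ≠ 0 := by
    exact_mod_cast ZMod.natCast_ne_zero_of_lt (k := 2) (by omega) hn
  set δ : ℕ → ZMod n := fun j => entryMod M 1 j - entryMod M 0 j with hδ_def
  -- δ is an arithmetic progression of signs, hence constant.
  have hδ : ∀ j < n, δ j = δ 0 + j * ((entryMod M 1 1 - entryMod M 1 0) -
      (entryMod M 0 1 - entryMod M 0 0)) := fun j hj => by
    simp only [hδ_def]
    rw [hc.entryMod_row hM 1 j hj, hc.entryMod_row hM 0 j hj]
    ring
  have hδ_sign : ∀ j, δ j = 1 ∨ δ j = -1 := fun j => hc.transpose.entryMod_succ_sub j (by omega)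
  have hδ01 : δ 0 = δ 1 := eq_of_add_eq_two_mul_of_eq_one_or_neg_one h2 h4 (hδ_sign 0)
    (hδ_sign 1) (hδ_sign 2) (by rw [hδ 1 (by omega), hδ 2 hn]; push_cast; ring)
  have hδ_const : ∀ j < n, δ j = δ 0 := fun j hj => by
    linear_combination hδ j hj - (j : ZMod n) * hδ 1 (by omega) - (j : ZMod n) * hδ01
  obtain ⟨σ, hσ⟩ := exists_intCast_unit_eq (hδ_sign 0)
  obtain ⟨τ, hτ⟩ := exists_intCast_unit_eq (x := entryMod M 0 1 - entryMod M 0 0)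
    (hc.entryMod_succ_sub 0 (by omega))
  refine ⟨entryMod M 0 0, σ, τ, funext fun i => funext fun j => ?_⟩
  apply ZMod.natCast_injOn_Icc (hM.1 i j) (ZMod.valIcc_mem_Icc _)
  have hij : (M i j : ZMod n) = entryMod M i j := by simp [entryMod]
  rw [ZMod.natCast_valIcc, hσ, hτ, hij]
  have hδj := hδ_const j j.isLt
  simp only [hδ_def] at hδj
  linear_combination hc.entryMod_col hM j i i.isLt + hc.entryMod_row hM 0 j j.isLt +
    (i.val : ZMod n) * hδj

theorem card_latin_isModConsecutive {n : ℕ} (hn : 2 < n) (h4 : (4 : ZMod n) ≠ 0) :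
    Nat.card {M : Fin n → Fin n → ℕ // latin n M ∧ IsModConsecutive n M} = 4 * n := by
  have : NeZero n := ⟨by omega⟩
  let F : ZMod n × ℤˣ × ℤˣ → {M // latin n M ∧ IsModConsecutive n M} := fun x =>
    ⟨linearSquare n x.1 x.2.1 x.2.2, latin_linearSquare _ _ _, isModConsecutive_linearSquare _ _ _⟩
  have hF : Function.Bijective F := by
    refine ⟨fun x y h => linearSquare_injective hn (congrArg Subtype.val h), ?_⟩
    rintro ⟨M, hM, hc⟩
    obtain ⟨c, σ, τ, rfl⟩ := hc.eq_linearSquare hn h4 hM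
    exact ⟨(c, σ, τ), rfl⟩
  rw [← Nat.card_eq_of_bijective F hF]
  simp only [Nat.card_eq_fintype_card, Fintype.card_prod, ZMod.card, Fintype.card_units_int]
  ring

/-- For `n > 4` there are exactly `4n` modular consecutive Latin squares of order `n`. -/
theorem stmt12 (n : ℕ) (hn : 4 < n) :
    Nat.card {M : Fin n → Fin n → ℕ // latin n M ∧
      ∀ p q : Fin n × Fin n, orthAdj n p q →
        ((M p.1 p.2 : ZMod n) - (M q.1 q.2 : ZMod n) = 1 ∨
         (M p.1 p.2 : ZMod n) - (M q.1 q.2 : ZMod n) = -1)} = 4 * n :=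
  card_latin_isModConsecutive (by omega) <| by
    exact_mod_cast ZMod.natCast_ne_zero_of_lt (k := 4) (by omega) hn
end

section
/- There is no anti-knight Latin square of order 3, i.e., no 3×3 Latin square in which any two cells a knight's move apart contain distinct values. -/
/-! In a row of a Latin square of order `n` every value occurs. The centre of the `3 × 3` board is
the only cell of the middle row that is neither in the column of a top corner nor a knight's move
away from it, so in an anti-knight Latin square of order 3 the centre repeats the value of both top
corners, which therefore coincide. -/

def IsAntiKnight (n : ℕ) (M : Fin n → Fin n → ℕ) : Prop :=
  ∀ p q : Fin n × Fin n, knightAdj n p q → M p.1 p.2 ≠ M q.1 q.2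

namespace latin

variable {n : ℕ} {M : Fin n → Fin n → ℕ}

theorem image_row_eq (hM : latin n M) (i : Fin n) :
    Finset.univ.image (M i) = Finset.Icc 1 n := by
  refine Finset.eq_of_subset_of_card_le ?_ ?_
  · rintro _ hv
    obtain ⟨j, -, rfl⟩ := Finset.mem_image.mp hv
    exact hM.1 i j
  · rw [Finset.card_image_of_injective _ (hM.2.1 i), Nat.card_Icc, Finset.card_univ,
      Fintype.card_fin, Nat.add_sub_cancel]

theorem exists_mem_row (hM : latin n M) (i : Fin n) {v : ℕ} (hv : v ∈ Finset.Icc 1 n) :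
    ∃ j, M i j = v := by
  rw [← hM.image_row_eq i] at hv
  simpa using hv

end latin

theorem center_eq_top_corner {M : Fin 3 → Fin 3 → ℕ} (hM : latin 3 M) (hK : IsAntiKnight 3 M)
    {c : Fin 3} (hc : c ≠ 1) : M 1 1 = M 0 c := by
  obtain ⟨j, hj⟩ := hM.exists_mem_row 1 (hM.1 0 c)
  obtain rfl | rfl : c = 0 ∨ c = 2 := by omega
  all_goals fin_cases j
  · exact absurd (hM.2.2 0 hj) (by decide)
  · exact hj
  · exact absurd hj.symm (hK (0, 0) (1, 2) (by unfold knightAdj; decide))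
  · exact absurd hj.symm (hK (0, 2) (1, 0) (by unfold knightAdj; decide))
  · exact hj
  · exact absurd (hM.2.2 2 hj) (by decide)

/-- There is no anti-knight Latin square of order 3. -/
theorem stmt13 :
    ¬ ∃ M : Fin 3 → Fin 3 → ℕ, latin 3 M ∧
      ∀ p q : Fin 3 × Fin 3, knightAdj 3 p q → M p.1 p.2 ≠ M q.1 q.2 := by
  rintro ⟨M, hM, hK⟩
  have h0 : M 1 1 = M 0 0 := center_eq_top_corner hM hK (by decide)
  have h2 : M 1 1 = M 0 2 := center_eq_top_corner hM hK (by decide)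
  exact absurd (hM.2.1 0 (h0.symm.trans h2)) (by decide)
end

section
/- Let n ≥ 1 and let k be an integer. The n×n array with entry (i,j) = 1 + ((j + ik) mod n) (0-indexed) is a toroidal anti-queen Latin square if and only if n is coprime with each of k-1, k, and k+1. -/
/-- The square is a toroidal anti-queen Latin square iff any two distinct cells in a
common row, column, or toroidal diagonal contain distinct values. -/
def torAntiQueen (n : ℕ) (M : Fin n → Fin n → ℕ) : Prop :=
  ∀ p q : Fin n × Fin n, p ≠ q →
    (p.1 = q.1 ∨ p.2 = q.2 ∨
     (p.1.val : ZMod n) - q.1.val = (p.2.val : ZMod n) - q.2.val ∨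
     (p.1.val : ZMod n) - q.1.val = -((p.2.val : ZMod n) - q.2.val)) →
    M p.1 p.2 ≠ M q.1 q.2


lemma aux_entry_eq_iff {n : ℕ} (hn : 0 < n) (a b : ℤ) :
    1 + (a % (n : ℤ)).toNat = 1 + (b % (n : ℤ)).toNat ↔ ((a : ZMod n) = (b : ZMod n)) := by
  have hn' : (0:ℤ) < n := by exact_mod_cast hn
  rw [add_right_inj, ZMod.intCast_eq_intCast_iff']
  have h1 := Int.emod_nonneg a (by omega : (n:ℤ) ≠ 0)
  have h2 := Int.emod_nonneg b (by omega : (n:ℤ) ≠ 0)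
  constructor <;> intro h <;> omega

lemma aux_fin_cast_inj {n : ℕ} [NeZero n] (i j : Fin n)
    (h : ((i : ℕ) : ZMod n) = ((j : ℕ) : ZMod n)) : i = j := by
  have := congrArg ZMod.val h
  rw [ZMod.val_cast_of_lt i.2, ZMod.val_cast_of_lt j.2] at this
  exact Fin.ext this

lemma aux_isUnit_iff_coprime {n : ℕ} (hn : 0 < n) (k : ℤ) :
    IsUnit ((k : ZMod n)) ↔ IsCoprime (n : ℤ) k := by
  haveI : NeZero n := ⟨by omega⟩
  constructor
  · rintro hu
    obtain ⟨z, hz⟩ := hu.exists_left_inv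
    set z' : ℤ := (z.val : ℤ) with hz'
    have hcz : ((z' : ZMod n)) = z := by
      rw [hz']; push_cast; exact ZMod.natCast_rightInverse z
    have hmod : ((z' * k : ℤ) : ZMod n) = ((1 : ℤ) : ZMod n) := by
      push_cast; rw [hcz, hz]
    rw [ZMod.intCast_eq_intCast_iff] at hmod
    obtain ⟨t, ht⟩ := hmod.dvd
    exact ⟨t, z', by linarith⟩
  · rintro ⟨u, v, huv⟩
    have h1 : ((u * n + v * k : ℤ) : ZMod n) = 1 := by rw [huv]; norm_cast
    push_cast at h1
    rw [ZMod.natCast_self, mul_zero, zero_add] at h1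
    exact IsUnit.of_mul_eq_one (a := _) v (by rw [mul_comm]; exact h1)

lemma aux_isUnit_of_mul_inj {n : ℕ} [NeZero n] {r : ZMod n}
    (h : ∀ x y : ZMod n, x * r = y * r → x = y) : IsUnit r := by
  have hs : Function.Surjective (fun x : ZMod n => x * r) :=
    Finite.injective_iff_surjective.mp (fun x y hxy => h x y hxy)
  obtain ⟨z, hz⟩ := hs 1
  exact IsUnit.of_mul_eq_one (a := r) z (by rw [mul_comm]; exact hz)

lemma aux_isUnit_of_ann {n : ℕ} [NeZero n] {r : ZMod n}
    (h : ∀ x : ZMod n, x * r = 0 → x = 0) : IsUnit r :=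
  aux_isUnit_of_mul_inj (fun x y hxy =>
    sub_eq_zero.mp (h _ (by rw [sub_mul, hxy, sub_self])))

lemma aux_ann_of_isUnit {n : ℕ} {r : ZMod n} (h : IsUnit r)
    {x : ZMod n} (hx : x * r = 0) : x = 0 :=
  (h.mul_left_eq_zero).mp hx

/-- For `n ≥ 1` and an integer `k`, the array with entry `(i,j) = 1 + ((j + ik) mod n)`
is a toroidal anti-queen Latin square iff `n` is coprime with `k-1`, `k`, and `k+1`. -/
theorem stmt16 (n : ℕ) (hn : 1 ≤ n) (k : ℤ) :
    (latin n (fun i j => 1 + (((j.val : ℤ) + (i.val : ℤ) * k) % (n : ℤ)).toNat) ∧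
     torAntiQueen n (fun i j => 1 + (((j.val : ℤ) + (i.val : ℤ) * k) % (n : ℤ)).toNat)) ↔
    (IsCoprime (n : ℤ) (k - 1) ∧ IsCoprime (n : ℤ) k ∧ IsCoprime (n : ℤ) (k + 1)) := by
  haveI : NeZero n := ⟨by omega⟩
  have hn0 : 0 < n := hn
  set K : ZMod n := (k : ZMod n) with hK
  have castm : (((k - 1 : ℤ)) : ZMod n) = K - 1 := by push_cast; rfl
  have castp : (((k + 1 : ℤ)) : ZMod n) = K + 1 := by push_cast; rfl
  have eqM : ∀ i j i' j' : Fin n,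
      (1 + (((j.val : ℤ) + (i.val : ℤ) * k) % (n : ℤ)).toNat =
       1 + (((j'.val : ℤ) + (i'.val : ℤ) * k) % (n : ℤ)).toNat) ↔
      (((j.val : ℕ) : ZMod n) + ((i.val : ℕ) : ZMod n) * K =
       ((j'.val : ℕ) : ZMod n) + ((i'.val : ℕ) : ZMod n) * K) := by
    intro i j i' j'
    rw [aux_entry_eq_iff hn0]
    constructor <;> intro h
    · have h2 := h; push_cast at h2; exact h2
    · push_cast; exact h
  constructor
  · rintro ⟨⟨_, _, hcol⟩, haq⟩
    refine ⟨?_, ?_, ?_⟩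
    · -- coprime with k - 1, via anti-diagonal condition
      rw [← aux_isUnit_iff_coprime hn0, castm]
      apply aux_isUnit_of_ann
      intro x hx
      by_contra hx0
      set i : Fin n := ⟨x.val, x.val_lt⟩ with hi
      have hxi : ((i.val : ℕ) : ZMod n) = x := ZMod.natCast_rightInverse x
      have hiv : i.val = x.val := rfl
      have hine : i ≠ (⟨0, hn0⟩ : Fin n) := by
        intro hcon
        exact hx0 (by rw [← hxi, hcon]; simp)
      refine haq (i, ⟨0, hn0⟩) (⟨0, hn0⟩, i) (fun hcon => hine (congrArg Prod.fst hcon))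
        (Or.inr (Or.inr (Or.inr ?_))) ?_
      · show ((i.val : ℕ) : ZMod n) - ((0:ℕ) : ZMod n) = -(((0:ℕ) : ZMod n) - (i.val : ℕ))
        push_cast
        ring
      · refine (eqM i ⟨0, hn0⟩ ⟨0, hn0⟩ i).mpr ?_
        show ((0:ℕ) : ZMod n) + ((x.val : ℕ) : ZMod n) * K
            = ((x.val : ℕ) : ZMod n) + ((0:ℕ) : ZMod n) * K
        rw [ZMod.natCast_rightInverse x]
        push_cast
        linear_combination hx
    · -- coprime with k, via column injectivity
      rw [← aux_isUnit_iff_coprime hn0]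
      apply aux_isUnit_of_mul_inj
      intro x y hxy
      set i : Fin n := ⟨x.val, x.val_lt⟩ with hi
      set i' : Fin n := ⟨y.val, y.val_lt⟩ with hi'
      have hxi : ((i.val : ℕ) : ZMod n) = x := ZMod.natCast_rightInverse x
      have hyi : ((i'.val : ℕ) : ZMod n) = y := ZMod.natCast_rightInverse y
      have heq : i = i' := by
        apply hcol (⟨0, hn0⟩ : Fin n)
        show 1 + _ = 1 + _
        rw [eqM, hxi, hyi, hxy]
      rw [← hxi, ← hyi, heq]
    · -- coprime with k + 1, via diagonal condition
      rw [← aux_isUnit_iff_coprime hn0, castp]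
      apply aux_isUnit_of_ann
      intro x hx
      by_contra hx0
      set i : Fin n := ⟨x.val, x.val_lt⟩ with hi
      have hxi : ((i.val : ℕ) : ZMod n) = x := ZMod.natCast_rightInverse x
      have hine : i ≠ (⟨0, hn0⟩ : Fin n) := by
        intro hcon
        exact hx0 (by rw [← hxi, hcon]; simp)
      refine haq (i, i) (⟨0, hn0⟩, ⟨0, hn0⟩) (fun hcon => hine (congrArg Prod.fst hcon))
        (Or.inr (Or.inr (Or.inl ?_))) ?_
      · rfl
      · refine (eqM i i ⟨0, hn0⟩ ⟨0, hn0⟩).mpr ?_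
        show ((x.val : ℕ) : ZMod n) + ((x.val : ℕ) : ZMod n) * K
            = ((0:ℕ) : ZMod n) + ((0:ℕ) : ZMod n) * K
        rw [ZMod.natCast_rightInverse x]
        push_cast
        linear_combination hx
  · rintro ⟨h1, h2, h3⟩
    have u1 : IsUnit (K - 1) := by
      rw [← castm]; exact (aux_isUnit_iff_coprime hn0 _).mpr h1
    have u2 : IsUnit K := (aux_isUnit_iff_coprime hn0 _).mpr h2
    have u3 : IsUnit (K + 1) := by
      rw [← castp]; exact (aux_isUnit_iff_coprime hn0 _).mpr h3
    constructor
    · refine ⟨?_, ?_, ?_⟩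
      · intro i j
        have hb1 := Int.emod_nonneg ((j.val : ℤ) + (i.val : ℤ) * k) (by positivity : (n:ℤ) ≠ 0)
        have hb2 := Int.emod_lt_of_pos ((j.val : ℤ) + (i.val : ℤ) * k) (by exact_mod_cast hn0 : (0:ℤ) < n)
        simp only [Finset.mem_Icc]
        omega
      · intro i j j' h
        simp only at h
        rw [eqM] at h
        exact aux_fin_cast_inj _ _ (by exact add_right_cancel h)
      · intro j i i' h
        simp only at h
        rw [eqM] at h
        have : (((i.val : ℕ) : ZMod n) - ((i'.val : ℕ) : ZMod n)) * K = 0 := by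
          linear_combination h
        exact aux_fin_cast_inj _ _ (sub_eq_zero.mp (aux_ann_of_isUnit u2 this))
    · intro p q hpq halign hMeq
      rw [eqM] at hMeq
      have hba : ((((p.2.val : ℕ) : ZMod n) - ((q.2.val : ℕ) : ZMod n))
          + (((p.1.val : ℕ) : ZMod n) - ((q.1.val : ℕ) : ZMod n)) * K) = 0 := by
        linear_combination hMeq
      apply hpq
      rcases halign with h | h | h | h
      · have ha : ((p.1.val : ℕ) : ZMod n) = ((q.1.val : ℕ) : ZMod n) := by
          rw [h]
        rw [ha, sub_self, zero_mul, add_zero, sub_eq_zero] at hba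
        exact Prod.ext h (aux_fin_cast_inj _ _ hba)
      · have hb : ((p.2.val : ℕ) : ZMod n) = ((q.2.val : ℕ) : ZMod n) := by
          rw [h]
        rw [hb, sub_self, zero_add] at hba
        have := sub_eq_zero.mp (aux_ann_of_isUnit u2 hba)
        exact Prod.ext (aux_fin_cast_inj _ _ this) h
      · have hz : (((p.1.val : ℕ) : ZMod n) - ((q.1.val : ℕ) : ZMod n)) * (K + 1) = 0 := by
          linear_combination hba + h
        have ha := sub_eq_zero.mp (aux_ann_of_isUnit u3 hz)
        have hb : ((p.2.val : ℕ) : ZMod n) = ((q.2.val : ℕ) : ZMod n) := by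
          have := h
          rw [ha, sub_self] at this
          exact sub_eq_zero.mp this.symm
        exact Prod.ext (aux_fin_cast_inj _ _ ha) (aux_fin_cast_inj _ _ hb)
      · have hz : (((p.1.val : ℕ) : ZMod n) - ((q.1.val : ℕ) : ZMod n)) * (K - 1) = 0 := by
          linear_combination hba - h
        have ha := sub_eq_zero.mp (aux_ann_of_isUnit u1 hz)
        have hb : ((p.2.val : ℕ) : ZMod n) = ((q.2.val : ℕ) : ZMod n) := by
          have h' := h
          rw [ha, sub_self] at h'
          have : ((p.2.val : ℕ) : ZMod n) - ((q.2.val : ℕ) : ZMod n) = 0 := by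
            linear_combination h'
          exact sub_eq_zero.mp this
        exact Prod.ext (aux_fin_cast_inj _ _ ha) (aux_fin_cast_inj _ _ hb)
end

section
/- A toroidal anti-queen Latin square of order n obtainable as a cyclic shift square (entry (i,j) = 1 + ((j + ik) mod n) for some k) exists if and only if gcd(n,6) = 1. -/
variable {n : ℕ}

lemma unit_of_ne [NeZero n] (c : ZMod n) (h : ∀ b : ZMod n, b ≠ 0 → b * c ≠ 0) :
    IsUnit c := by
  have inj : Function.Injective (fun b : ZMod n => b * c) := by
    intro a b hab
    by_contra hne
    exact h (a - b) (sub_ne_zero.mpr hne)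
      (by simp only [sub_mul]; simp at hab; rw [hab, sub_self])
  obtain ⟨b, hb⟩ := Finite.injective_iff_surjective.mp inj 1
  exact IsUnit.of_mul_eq_one (a := c) b (by rw [mul_comm]; exact hb)

lemma Meq [NeZero n] (k : ℕ) (i j i' j' : Fin n) :
    1 + (j.val + i.val * k) % n = 1 + (j'.val + i'.val * k) % n ↔
      (j.val : ZMod n) + (i.val : ZMod n) * k = (j'.val : ZMod n) + (i'.val : ZMod n) * k := by
  rw [add_right_inj]
  constructor
  · intro h
    have : ((j.val + i.val * k : ℕ) : ZMod n) = ((j'.val + i'.val * k : ℕ) : ZMod n) :=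
      (ZMod.natCast_eq_natCast_iff _ _ _).mpr h
    push_cast at this
    exact this
  · intro h
    have : ((j.val + i.val * k : ℕ) : ZMod n) = ((j'.val + i'.val * k : ℕ) : ZMod n) := by
      push_cast; exact h
    exact (ZMod.natCast_eq_natCast_iff _ _ _).mp this

lemma fin_cast_inj [NeZero n] {i i' : Fin n} (h : (i.val : ZMod n) = (i'.val : ZMod n)) :
    i = i' := by
  have := congrArg ZMod.val h
  rwa [ZMod.val_cast_of_lt i.isLt, ZMod.val_cast_of_lt i'.isLt, ← Fin.ext_iff] at this

lemma eq_zero_of_mul_unit {c b : ZMod n} (hu : IsUnit c) (h : b * c = 0) : b = 0 :=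
  hu.mul_right_cancel (by rw [h, zero_mul])

lemma suffices_units [NeZero n] (k : ℕ) (hk : IsUnit ((k : ZMod n)))
    (h1 : IsUnit ((k : ZMod n) + 1)) (h2 : IsUnit (1 - (k : ZMod n))) :
    latin n (fun i j => 1 + (j.val + i.val * k) % n) ∧
      torAntiQueen n (fun i j => 1 + (j.val + i.val * k) % n) := by
  have hn : 0 < n := Nat.pos_of_ne_zero (NeZero.ne n)
  constructor
  · refine ⟨fun i j => ?_, fun i j j' h => ?_, fun j i i' h => ?_⟩
    · have := Nat.mod_lt (j.val + i.val * k) hn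
      simp only [Finset.mem_Icc]; omega
    · simp only at h
      exact fin_cast_inj (add_right_cancel ((Meq k i j i j').mp h))
    · simp only at h
      have h2' : (i.val : ZMod n) * k = (i'.val : ZMod n) * k :=
        add_left_cancel ((Meq k i j i' j).mp h)
      exact fin_cast_inj (hk.mul_right_cancel h2')
  · intro p q hne hcond heq
    simp only at heq
    have key := (Meq k p.1 p.2 q.1 q.2).mp heq
    set a : ZMod n := (p.1.val : ZMod n) - q.1.val with ha
    set b : ZMod n := (p.2.val : ZMod n) - q.2.val with hb
    have hab : b + a * k = 0 := by rw [ha, hb]; ring_nf; linear_combination key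
    have hpq : a = 0 → b = 0 → False := by
      intro h1' h2'
      apply hne
      have e1 : p.1 = q.1 := fin_cast_inj (by rwa [sub_eq_zero] at h1')
      have e2 : p.2 = q.2 := fin_cast_inj (by rwa [sub_eq_zero] at h2')
      exact Prod.ext e1 e2
    rcases hcond with h | h | h | h
    · have ha0 : a = 0 := by rw [ha, h, sub_self]
      have hb0 : b = 0 := by rw [ha0, mul_comm] at hab; simpa using hab
      exact hpq ha0 hb0
    · have hb0 : b = 0 := by rw [hb, h, sub_self]
      have hak : a * k = 0 := by rw [hb0] at hab; simpa using hab
      have ha0 : a = 0 := eq_zero_of_mul_unit hk hak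
      exact hpq ha0 hb0
    · -- a = b
      have : b * ((k : ZMod n) + 1) = 0 := by linear_combination hab - (k : ZMod n) * h
      have hb0 : b = 0 := eq_zero_of_mul_unit h1 this
      exact hpq (by rw [h, hb0]) hb0
    · -- a = -b
      have : b * ((1 : ZMod n) - k) = 0 := by linear_combination hab - (k : ZMod n) * h
      have hb0 : b = 0 := eq_zero_of_mul_unit h2 this
      exact hpq (by rw [h, hb0, neg_zero]) hb0

/-- A toroidal anti-queen Latin square of order `n` obtained by the cyclic shifting
method exists iff `n` is coprime with 6. -/
theorem stmt17 (n : ℕ) (hn : 1 ≤ n) :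
    (∃ k : ℕ, latin n (fun i j => 1 + (j.val + i.val * k) % n) ∧
      torAntiQueen n (fun i j => 1 + (j.val + i.val * k) % n)) ↔
    Nat.Coprime n 6 := by
  haveI : NeZero n := ⟨by omega⟩
  constructor
  · rintro ⟨k, -, hq⟩
    -- extract units
    have hu : ∀ b : ZMod n, b ≠ 0 →
        (b * (k : ZMod n) ≠ 0 ∧ b * ((k : ZMod n) + 1) ≠ 0 ∧ b * (1 - (k : ZMod n)) ≠ 0) := by
      intro b hb
      have hbv : (b.val : ZMod n) = b := ZMod.natCast_rightInverse b
      have hbv0 : b.val ≠ 0 := fun h => hb ((ZMod.val_eq_zero b).mp h)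
      have hz : (0 : ℕ) < n := by omega
      refine ⟨?_, ?_, ?_⟩
      · -- column: p = (b.val, 0), q = (0,0)
        have := hq (⟨b.val, b.val_lt⟩, ⟨0, hz⟩) (⟨0, hz⟩, ⟨0, hz⟩)
          (by simp [Prod.ext_iff, Fin.ext_iff, hbv0]) (by right; left; rfl)
        simp only at this
        intro hc
        exact this ((Meq k ⟨b.val, b.val_lt⟩ ⟨0, hz⟩ ⟨0, hz⟩ ⟨0, hz⟩).mpr
          (by push_cast; rw [hbv]; linear_combination hc))
      · -- diagonal a = b
        have := hq (⟨b.val, b.val_lt⟩, ⟨b.val, b.val_lt⟩) (⟨0, hz⟩, ⟨0, hz⟩)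
          (by simp [Prod.ext_iff, Fin.ext_iff, hbv0]) (by right; right; left; rfl)
        simp only at this
        intro hc
        exact this ((Meq k ⟨b.val, b.val_lt⟩ ⟨b.val, b.val_lt⟩ ⟨0, hz⟩ ⟨0, hz⟩).mpr
          (by push_cast; rw [hbv]; linear_combination hc))
      · -- anti-diagonal a = -b : p = ((-b).val, b.val)
        have := hq (⟨(-b).val, (-b).val_lt⟩, ⟨b.val, b.val_lt⟩) (⟨0, hz⟩, ⟨0, hz⟩)
          (by simp [Prod.ext_iff, Fin.ext_iff, hbv0])
          (by
            right; right; right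
            simp only
            push_cast
            rw [hbv, ZMod.natCast_rightInverse (-b)]
            ring)
        simp only at this
        intro hc
        exact this ((Meq k ⟨(-b).val, (-b).val_lt⟩ ⟨b.val, b.val_lt⟩ ⟨0, hz⟩ ⟨0, hz⟩).mpr
          (by push_cast; rw [hbv, ZMod.natCast_rightInverse (-b)]; linear_combination hc))
    have hk : IsUnit ((k : ZMod n)) := unit_of_ne _ fun b hb => (hu b hb).1
    have h1 : IsUnit ((k : ZMod n) + 1) := unit_of_ne _ fun b hb => (hu b hb).2.1
    have h2 : IsUnit (1 - (k : ZMod n)) := unit_of_ne _ fun b hb => (hu b hb).2.2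
    -- now show coprime with 2 and 3
    have c2 : Nat.Coprime n 2 := by
      rw [Nat.coprime_comm]
      rw [Nat.Prime.coprime_iff_not_dvd Nat.prime_two]
      intro hdvd
      let φ := ZMod.castHom hdvd (ZMod 2)
      have u1 : IsUnit (φ (k : ZMod n)) := hk.map φ
      have u2 : IsUnit (φ ((k : ZMod n) + 1)) := h1.map φ
      rw [map_add, map_one] at u2
      have : ∀ x : ZMod 2, x = 0 ∨ x + 1 = 0 := by decide
      rcases this (φ (k : ZMod n)) with h | h
      · rw [h] at u1; exact not_isUnit_zero u1
      · rw [h] at u2; exact not_isUnit_zero u2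
    have c3 : Nat.Coprime n 3 := by
      rw [Nat.coprime_comm]
      rw [Nat.Prime.coprime_iff_not_dvd Nat.prime_three]
      intro hdvd
      let φ := ZMod.castHom hdvd (ZMod 3)
      have u1 : IsUnit (φ (k : ZMod n)) := hk.map φ
      have u2 : IsUnit (φ (k : ZMod n) + 1) := by
        have := h1.map φ; rwa [map_add, map_one] at this
      have u3 : IsUnit (1 - φ (k : ZMod n)) := by
        have := h2.map φ; rwa [map_sub, map_one] at this
      have : ∀ x : ZMod 3, x = 0 ∨ x + 1 = 0 ∨ 1 - x = 0 := by decide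
      rcases this (φ (k : ZMod n)) with h | h | h
      · rw [h] at u1; exact not_isUnit_zero u1
      · rw [h] at u2; exact not_isUnit_zero u2
      · rw [h] at u3; exact not_isUnit_zero u3
    have : (6 : ℕ) = 2 * 3 := by norm_num
    rw [this]
    exact Nat.Coprime.mul_right c2 c3
  · intro hcop
    refine ⟨2, suffices_units 2 ?_ ?_ ?_⟩
    · rw [ZMod.isUnit_iff_coprime]
      exact (hcop.coprime_dvd_right (by norm_num)).symm
    · have : ((2 : ℕ) : ZMod n) + 1 = ((3 : ℕ) : ZMod n) := by push_cast; ring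
      rw [this, ZMod.isUnit_iff_coprime]
      exact (hcop.coprime_dvd_right (by norm_num)).symm
    · have : (1 : ZMod n) - ((2 : ℕ) : ZMod n) = -1 := by push_cast; ring
      rw [this]
      exact (isUnit_one).neg
end

section
/- King Latin squares of odd order do not exist: for odd n there is no n×n Latin square in which every cell has another cell a king's move apart containing the same value. -/
/-!
Every cell of the top row needs a partner of the same value a king's move away. The partner
cannot share its row or its column, so it sits in the second row in an adjacent column. Since the
second row repeats no value, sending each column to its partner's column is a permutation of the
columns that moves every column by `±1`. The displacements of a permutation sum to `0`, while
`n` odd numbers have an odd sum, so `n` is even.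
-/

theorem Equiv.Perm.even_card_of_odd_sub {α : Type*} [Fintype α] (σ : Equiv.Perm α) (g : α → ℤ)
    (h : ∀ a, Odd (g (σ a) - g a)) : Even (Fintype.card α) := by
  have hsum : ∑ a, (g (σ a) - g a) = 0 := by
    rw [Finset.sum_sub_distrib, Equiv.sum_comp, sub_self]
  have hmod := congrArg (Int.cast : ℤ → ZMod 2) hsum
  rw [Int.cast_sum, Finset.sum_congr rfl fun a _ => ZMod.intCast_eq_one_iff_odd.mpr (h a)] at hmod
  simpa [ZMod.natCast_eq_zero_iff_even] using hmod

section

variable {n : ℕ} {M : Fin n → Fin n → ℕ} {p q : Fin n × Fin n}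

theorem latin.fst_ne_of_ne (hM : latin n M) (hpq : p ≠ q) (hv : M q.1 q.2 = M p.1 p.2) :
    p.1 ≠ q.1 := by
  intro h
  rw [h] at hv
  exact hpq (Prod.ext h (hM.2.1 q.1 hv).symm)

theorem latin.snd_ne_of_ne (hM : latin n M) (hpq : p ≠ q) (hv : M q.1 q.2 = M p.1 p.2) :
    p.2 ≠ q.2 := by
  intro h
  rw [h] at hv
  exact hpq (Prod.ext (hM.2.2 q.2 hv).symm h)

theorem kingAdj.val_fst_eq_one (h : kingAdj n p q) (hp : p.1.val = 0) (hne : p.1 ≠ q.1) :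
    q.1.val = 1 := by
  have hne' : q.1.val ≠ 0 := fun h0 => hne (Fin.ext (hp.trans h0.symm))
  have := h.2.1
  omega

theorem kingAdj.odd_sub_snd (h : kingAdj n p q) (hne : p.2 ≠ q.2) :
    Odd ((q.2.val : ℤ) - p.2.val) := by
  have hne' : p.2.val ≠ q.2.val := Fin.val_ne_of_ne hne
  have habs : ((q.2.val : ℤ) - p.2.val).natAbs = 1 := by
    have := h.2.2
    omega
  rw [← Int.natAbs_odd, habs]
  exact odd_one

end

/-- King Latin squares of odd order do not exist. -/
theorem stmt18 (n : ℕ) (hodd : Odd n) :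
    ¬ ∃ M : Fin n → Fin n → ℕ, latin n M ∧
      ∀ p : Fin n × Fin n, ∃ q : Fin n × Fin n,
        kingAdj n p q ∧ M q.1 q.2 = M p.1 p.2 := by
  rintro ⟨M, hM, hking⟩
  let top : Fin n := ⟨0, hodd.pos⟩
  choose q hadj hMq using fun j : Fin n => hking (top, j)
  have hsecond : ∀ j, (q j).1.val = 1 := fun j =>
    (hadj j).val_fst_eq_one rfl (hM.fst_ne_of_ne (hadj j).1 (hMq j))
  have hinj : Function.Injective fun j => (q j).2 := by
    intro j₁ j₂ h
    have hrows : (q j₁).1 = (q j₂).1 := Fin.ext ((hsecond j₁).trans (hsecond j₂).symm)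
    apply hM.2.1 top
    change M top j₁ = M top j₂
    rw [← hMq j₁, ← hMq j₂, hrows, show (q j₁).2 = (q j₂).2 from h]
  let σ : Equiv.Perm (Fin n) := Equiv.ofBijective _ (Finite.injective_iff_bijective.mp hinj)
  have heven := σ.even_card_of_odd_sub (fun j => (j.val : ℤ)) fun j =>
    (hadj j).odd_sub_snd (hM.snd_ne_of_ne (hadj j).1 (hMq j))
  rw [Fintype.card_fin] at heven
  exact Nat.not_even_iff_odd.mpr hodd heven
end
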